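/- arXiv:1207.5169 — 10 statements merged into one kernel-verified Lean document; each statement's English description precedes it below -/
import Mathlib

section
/- Let (G_i)_{i ∈ I} be a family of profinite groups such that for all i ≠ j, no finite nonabelian simple group is a continuous quotient of both G_i and G_j (i.e., there is no finite group S, simple and nonabelian, admitting continuous surjective group homomorphisms G_i → S and G_j → S, where S carries the discrete topology). Let G = ∏_{i ∈ I} G_i with the product topology, and let H ≤ G be a closed subgroup such that (a) for every i ∈ I the projection G → G_i maps H onto G_i, and (b) the quotient map G → G/N maps H onto G/N, where N is the topological closure of the commutator subgroup [G,G] of G. Then H = G. -/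
/-!
A closed subgroup is everything as soon as it is dense, and in a product of profinite groups
density means surjecting onto every finite quotient `∏ i ∈ F, G i ⧸ N i`. We argue by induction
on `F`: the image `K` of `H` in `G j ⧸ N j × ∏ i ∈ F, G i ⧸ N i` projects onto both factors, so
if it were proper, Goursat's lemma would produce a common simple quotient `S` of the two factors
on which `K` becomes a graph. If `S` is abelian, the character `(a, b) ↦ f a * (g b)⁻¹` kills both
`K` and the commutator subgroup, contradicting that `H` maps onto the abelianization; if `S` is
nonabelian, it is already a quotient of a single factor `G i ⧸ N i` with `i ≠ j`, which the
hypothesis forbids.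
-/

open Function

universe u

theorem exists_normal_isSimpleGroup_quotient (C : Type*) [Group C] [Finite C] [Nontrivial C] :
    ∃ (N : Subgroup C) (_ : N.Normal), IsSimpleGroup (C ⧸ N) := by
  obtain ⟨N, ⟨hN, hNtop⟩, hmax⟩ :=
    Set.Finite.exists_maximal (Set.toFinite {N : Subgroup C | N.Normal ∧ N ≠ ⊤})
      ⟨⊥, inferInstance, bot_ne_top⟩
  refine ⟨N, hN, ?_⟩
  have : Nontrivial (C ⧸ N) := QuotientGroup.nontrivial_iff.mpr hNtop
  have hcomap := Subgroup.comap_injective (QuotientGroup.mk'_surjective N)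
  refine ⟨fun M hM => ?_⟩
  by_cases htop : M.comap (QuotientGroup.mk' N) = ⊤
  · exact .inr (hcomap (by rwa [Subgroup.comap_top]))
  · refine .inl (hcomap ?_)
    rw [MonoidHom.comap_bot, QuotientGroup.ker_mk']
    exact (hmax ⟨hM.comap _, htop⟩ (QuotientGroup.le_comap_mk' N M)).antisymm
      (QuotientGroup.le_comap_mk' N M)

theorem MonoidHom.exists_surjective_comp_mulSingle {ι : Type*} [Finite ι] [DecidableEq ι]
    {C : ι → Type*} [∀ i, Group (C i)] {S : Type*} [Group S] [IsSimpleGroup S]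
    (π : (∀ i, C i) →* S) (hπ : Surjective π) :
    ∃ i, Surjective (π.comp (MonoidHom.mulSingle C i)) := by
  by_contra! hcon
  have hfactor (i : ι) : (π.comp (MonoidHom.mulSingle C i)).range = ⊥ := by
    refine (Subgroup.Normal.eq_bot_or_eq_top ⟨?_⟩).resolve_right
      (fun h => hcon i (MonoidHom.range_eq_top.mp h))
    rintro _ ⟨x, rfl⟩ s
    obtain ⟨y, rfl⟩ := hπ s
    refine ⟨y i * x * (y i)⁻¹, ?_⟩
    simp only [MonoidHom.comp_apply, MonoidHom.mulSingle_apply, ← map_inv, ← map_mul]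
    congr 1
    ext k
    rcases eq_or_ne k i with rfl | hk
    · simp
    · simp [Pi.mulSingle_eq_of_ne hk]
  have hker : (⊤ : Submonoid (∀ i, C i)) ≤ π.ker.toSubmonoid := by
    rw [← Submonoid.pi_top Set.univ, ← Submonoid.iSup_map_mulSingle]
    refine iSup_le fun i => ?_
    rintro _ ⟨x, -, rfl⟩
    have : π (Pi.mulSingle i x) ∈ (π.comp (MonoidHom.mulSingle C i)).range := ⟨x, rfl⟩
    rwa [hfactor, Subgroup.mem_bot] at this
  obtain ⟨s, hs⟩ := exists_ne (1 : S)
  obtain ⟨y, rfl⟩ := hπ s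
  exact hs (hker trivial)

theorem Subgroup.exists_isSimpleGroup_quotients_of_ne_top {A : Type u} {B : Type*} [Group A]
    [Group B] [Finite A] {K : Subgroup (A × B)} (hA : Surjective (Prod.fst ∘ K.subtype))
    (hB : Surjective (Prod.snd ∘ K.subtype)) (hK : K ≠ ⊤) :
    ∃ (S : Type u) (_ : Group S) (_ : IsSimpleGroup S) (f : A →* S) (g : B →* S),
      Surjective f ∧ Surjective g ∧ ∀ p ∈ K, f p.1 = g p.2 := by
  have := normal_goursatFst hA
  have := normal_goursatSnd hB
  obtain ⟨e, he⟩ := goursat_surjective hA hB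
  have hFst : K.goursatFst ≠ ⊤ := by
    intro hFst
    have hSnd : K.goursatSnd = ⊤ := by
      rw [← QuotientGroup.subsingleton_iff, ← e.subsingleton_congr, QuotientGroup.subsingleton_iff,
        hFst]
    refine hK (top_le_iff.mp ?_)
    simpa [hFst, hSnd] using K.goursatFst_prod_goursatSnd_le
  have := QuotientGroup.nontrivial_iff.mpr hFst
  obtain ⟨M, _, _⟩ := exists_normal_isSimpleGroup_quotient (A ⧸ K.goursatFst)
  refine ⟨_, _, ‹_›, (QuotientGroup.mk' M).comp (QuotientGroup.mk' _),
    ((QuotientGroup.mk' M).comp e.symm.toMonoidHom).comp (QuotientGroup.mk' _),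
    (QuotientGroup.mk'_surjective _).comp (QuotientGroup.mk'_surjective _),
    ((QuotientGroup.mk'_surjective _).comp e.symm.surjective).comp
      (QuotientGroup.mk'_surjective _), fun p hp => ?_⟩
  have hgraph : e p.1 = p.2 := by
    have : ((p.1 : A ⧸ K.goursatFst), (p.2 : B ⧸ K.goursatSnd)) ∈ e.toMonoidHom.graph :=
      he ▸ ⟨⟨p, hp⟩, rfl⟩
    simpa [MonoidHom.mem_graph] using this
  simp [← hgraph]

theorem MonoidHom.eq_of_le_eqLocus_of_sup_commutator_eq_top {P S : Type*} [Group P] [CommGroup S]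
    {K : Subgroup P} (hK : K ⊔ commutator P = ⊤) {φ ψ : P →* S} (h : K ≤ φ.eqLocus ψ) :
    φ = ψ := by
  have hcomm : commutator P ≤ φ.eqLocus ψ := fun x hx =>
    (Abelianization.commutator_subset_ker φ hx).trans
      (Abelianization.commutator_subset_ker ψ hx).symm
  have htop : ⊤ ≤ φ.eqLocus ψ := hK ▸ sup_le h hcomm
  exact MonoidHom.ext fun x => htop trivial

def Pi.restrictMonoidHom {ι : Type*} (Q : ι → Type*) [∀ i, Group (Q i)] (s : Set ι) :
    (∀ i, Q i) →* ∀ i : s, Q i :=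
  MonoidHom.pi fun i => Pi.evalMonoidHom Q i

section FiniteProduct

variable {ι : Type*} {Q : ι → Type u} [∀ i, Group (Q i)] [∀ i, Finite (Q i)]
  (hQ : ∀ i j, i ≠ j → ∀ (S : Type u) [Group S] [IsSimpleGroup S],
    (¬ ∀ a b : S, a * b = b * a) → ∀ f : Q i →* S, Surjective f → ∀ g : Q j →* S, ¬ Surjective g)
  {K : Subgroup (∀ i, Q i)} (hproj : ∀ i, K.map (Pi.evalMonoidHom Q i) = ⊤)
  (hab : K ⊔ _root_.commutator (∀ i, Q i) = ⊤)
include hQ hproj hab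

theorem exists_mem_agree_on_insert [DecidableEq ι] {s : Finset ι} {j : ι} (hj : j ∉ s)
    (hs : ∀ x : ∀ i, Q i, ∃ k ∈ K, ∀ i ∈ s, k i = x i) (x : ∀ i, Q i) :
    ∃ k ∈ K, ∀ i ∈ insert j s, k i = x i := by
  set Φ := (Pi.evalMonoidHom Q j).prod (Pi.restrictMonoidHom Q s)
  have hL : K.map Φ = ⊤ := by
    by_contra hL
    have hfst : Surjective (Prod.fst ∘ (K.map Φ).subtype) := by
      intro a
      obtain ⟨k, hk, rfl⟩ := (hproj j).ge (Subgroup.mem_top a)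
      exact ⟨⟨Φ k, Subgroup.mem_map_of_mem Φ hk⟩, rfl⟩
    have hsnd : Surjective (Prod.snd ∘ (K.map Φ).subtype) := by
      intro b
      obtain ⟨k, hk, hkb⟩ := hs fun i => if hi : i ∈ s then b ⟨i, hi⟩ else 1
      exact ⟨⟨Φ k, Subgroup.mem_map_of_mem Φ hk⟩, funext fun i =>
        (hkb i i.2).trans (dif_pos i.2)⟩
    obtain ⟨S, _, _, f, g, hf, hg, hfg⟩ :=
      Subgroup.exists_isSimpleGroup_quotients_of_ne_top hfst hsnd hL
    by_cases hcomm : ∀ a b : S, a * b = b * a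
    · let _ : CommGroup S := { mul_comm := hcomm }
      have heq : f.comp (Pi.evalMonoidHom Q j) = g.comp (Pi.restrictMonoidHom Q s) :=
        MonoidHom.eq_of_le_eqLocus_of_sup_commutator_eq_top hab fun k hk =>
          hfg (Φ k) (Subgroup.mem_map_of_mem Φ hk)
      obtain ⟨t, hne⟩ := exists_ne (1 : S)
      obtain ⟨a, rfl⟩ := hf t
      refine hne ?_
      have hrestrict : Pi.restrictMonoidHom Q s (Pi.mulSingle j a) = 1 :=
        funext fun i => Pi.mulSingle_eq_of_ne (fun h : (i : ι) = j => hj (h ▸ i.2)) a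
      simpa [hrestrict] using DFunLike.congr_fun heq (Pi.mulSingle j a)
    · obtain ⟨i, hi⟩ := g.exists_surjective_comp_mulSingle hg
      exact hQ j i (fun h => hj (h ▸ i.2)) S hcomm f hf _ hi
  obtain ⟨k, hk, hkx⟩ := hL.ge (Subgroup.mem_top (Φ x))
  refine ⟨k, hk, (Finset.forall_mem_insert _ _ _).mpr ⟨?_, fun i hi => ?_⟩⟩
  · exact congrArg Prod.fst hkx
  · exact congrFun (congrArg Prod.snd hkx) ⟨i, hi⟩

theorem Subgroup.eq_top_of_sup_commutator_eq_top [Finite ι] : K = ⊤ := by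
  classical
  have := Fintype.ofFinite ι
  have hall (s : Finset ι) (x : ∀ i, Q i) : ∃ k ∈ K, ∀ i ∈ s, k i = x i := by
    induction s using Finset.induction_on generalizing x with
    | empty => exact ⟨1, K.one_mem, by simp⟩
    | insert j s hj ih => exact exists_mem_agree_on_insert hQ hproj hab hj ih x
  refine eq_top_iff.mpr fun x _ => ?_
  obtain ⟨k, hk, hkx⟩ := hall Finset.univ x
  exact funext (fun i => hkx i (Finset.mem_univ i)) ▸ hk

end FiniteProduct

def Pi.restrictQuotientMonoidHom {I : Type*} {G : I → Type*} [∀ i, Group (G i)]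
    [∀ i, TopologicalSpace (G i)] (F : Set I) (N : ∀ i, OpenNormalSubgroup (G i)) :
    (∀ i, G i) →* ∀ i : F, G i ⧸ (N i).toSubgroup :=
  MonoidHom.pi fun i => (QuotientGroup.mk' (N i).toSubgroup).comp (Pi.evalMonoidHom G i)

section Profinite

variable {I : Type*} {G : I → Type*} [∀ i, Group (G i)] [∀ i, TopologicalSpace (G i)]

namespace Pi

theorem restrictQuotientMonoidHom_surjective (F : Set I) (N : ∀ i, OpenNormalSubgroup (G i)) :
    Surjective (restrictQuotientMonoidHom F N) := by
  classical
  intro y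
  refine ⟨fun i => if h : i ∈ F then (y ⟨i, h⟩).out else 1, funext fun i => ?_⟩
  simp [restrictQuotientMonoidHom]

theorem continuous_restrictQuotientMonoidHom (F : Set I) (N : ∀ i, OpenNormalSubgroup (G i)) :
    Continuous (restrictQuotientMonoidHom F N) :=
  continuous_pi fun i => continuous_quotient_mk'.comp (continuous_apply i.1)

end Pi

theorem Subgroup.map_sup_commutator_eq_top {X Y : Type*} [Group X] [TopologicalSpace X]
    [IsTopologicalGroup X] [Group Y] [TopologicalSpace Y] [DiscreteTopology Y] {H : Subgroup X}
    (hH : H.map (QuotientGroup.mk' (_root_.commutator X).topologicalClosure) = ⊤) {φ : X →* Y}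
    (hφ : Continuous φ) (hsurj : Surjective φ) : H.map φ ⊔ _root_.commutator Y = ⊤ := by
  have hcomm : _root_.commutator X ≤ (_root_.commutator Y).comap φ := Subgroup.commutator_le.mpr
    fun a _ b _ => by
      rw [Subgroup.mem_comap, map_commutatorElement]
      exact Subgroup.commutator_mem_commutator (Subgroup.mem_top _) (Subgroup.mem_top _)
  have hclosure : (_root_.commutator X).topologicalClosure ≤ (_root_.commutator Y).comap φ :=
    Subgroup.topologicalClosure_minimal _ hcomm
      ((isClosed_discrete (_root_.commutator Y : Set Y)).preimage hφ)
  have hsup : H ⊔ (_root_.commutator X).topologicalClosure = ⊤ := by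
    rw [← QuotientGroup.ker_mk' (_root_.commutator X).topologicalClosure,
      ← Subgroup.comap_map_eq, hH, Subgroup.comap_top]
  refine top_le_iff.mp ?_
  calc ⊤ = (H ⊔ (_root_.commutator X).topologicalClosure).map φ := by
        rw [hsup, Subgroup.map_top_of_surjective φ hsurj]
    _ = H.map φ ⊔ (_root_.commutator X).topologicalClosure.map φ := Subgroup.map_sup _ _ _
    _ ≤ H.map φ ⊔ _root_.commutator Y :=
        sup_le_sup_left (Subgroup.map_le_iff_le_comap.mpr hclosure) _

theorem Subgroup.dense_of_forall_map_restrictQuotientMonoidHom_eq_top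
    [∀ i, IsTopologicalGroup (G i)] [∀ i, CompactSpace (G i)]
    [∀ i, TotallyDisconnectedSpace (G i)] {H : Subgroup (∀ i, G i)}
    (hH : ∀ (F : Finset I) (N : ∀ i, OpenNormalSubgroup (G i)),
      H.map (Pi.restrictQuotientMonoidHom (F : Set I) N) = ⊤) :
    Dense (H : Set (∀ i, G i)) := by
  classical
  intro x
  rw [mem_closure_iff]
  intro o ho hxo
  obtain ⟨F, u, hu, hsub⟩ := isOpen_pi_iff.mp ho x hxo
  have hN (i : I) : ∃ N : OpenNormalSubgroup (G i), i ∈ F → ∀ n ∈ N, x i * n ∈ u i := by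
    by_cases hi : i ∈ F
    · obtain ⟨N, hN⟩ := ProfiniteGrp.exist_openNormalSubgroup_sub_open_nhds_of_one
        ((hu i hi).1.preimage (continuous_const_mul (x i))) (by simpa using (hu i hi).2)
      exact ⟨N, fun _ n hn => hN hn⟩
    · exact ⟨{ toOpenSubgroup := ⊤, isNormal' := (⊤ : Subgroup (G i)).normal_of_characteristic },
        fun h => absurd h hi⟩
  choose N hN using hN
  obtain ⟨h, hh, hhx⟩ := (hH F N).ge (Subgroup.mem_top (Pi.restrictQuotientMonoidHom _ N x))
  refine ⟨h, hsub fun i hi => ?_, hh⟩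
  have : (x i)⁻¹ * h i ∈ N i := QuotientGroup.eq.mp (congrFun hhx ⟨i, hi⟩).symm
  simpa using hN i hi _ this

theorem not_surjective_of_common_nonabelian_simple_quotient [∀ i, IsTopologicalGroup (G i)]
    [∀ i, CompactSpace (G i)]
    (hquo : ∀ i j : I, i ≠ j →
      ∀ (S : Type) [Group S] [Finite S] [IsSimpleGroup S],
        (¬ ∀ a b : S, a * b = b * a) →
        ¬ ((∃ f : G i →* S, @Continuous (G i) S _ ⊥ f ∧ Function.Surjective f) ∧
           (∃ g : G j →* S, @Continuous (G j) S _ ⊥ g ∧ Function.Surjective g)))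
    {i j : I} (hij : i ≠ j) (Ni : OpenNormalSubgroup (G i)) (Nj : OpenNormalSubgroup (G j))
    (S : Type*) [Group S] [IsSimpleGroup S] (hS : ¬ ∀ a b : S, a * b = b * a)
    (f : G i ⧸ Ni.toSubgroup →* S) (hf : Surjective f) (g : G j ⧸ Nj.toSubgroup →* S) :
    ¬ Surjective g := by
  intro hg
  have : Finite S := Finite.of_surjective f hf
  let e : Shrink.{0} S ≃* S := Shrink.mulEquiv
  have : IsSimpleGroup (Shrink.{0} S) := e.isSimpleGroup
  let _ : TopologicalSpace (Shrink.{0} S) := ⊥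
  refine hquo i j hij (Shrink.{0} S)
    (fun h => hS fun a b => by simpa using congrArg e (h (e.symm a) (e.symm b))) ⟨?_, ?_⟩
  · exact ⟨(e.symm.toMonoidHom.comp f).comp (QuotientGroup.mk' _),
      (continuous_of_discreteTopology (f := e.symm.toMonoidHom.comp f)).comp
        continuous_quotient_mk',
      e.symm.surjective.comp (hf.comp (QuotientGroup.mk'_surjective _))⟩
  · exact ⟨(e.symm.toMonoidHom.comp g).comp (QuotientGroup.mk' _),
      (continuous_of_discreteTopology (f := e.symm.toMonoidHom.comp g)).comp
        continuous_quotient_mk',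
      e.symm.surjective.comp (hg.comp (QuotientGroup.mk'_surjective _))⟩

end Profinite

theorem stmt0_general {I : Type*} (G : I → Type*) [∀ i, Group (G i)]
    [∀ i, TopologicalSpace (G i)] [∀ i, IsTopologicalGroup (G i)]
    [∀ i, CompactSpace (G i)]
    [∀ i, TotallyDisconnectedSpace (G i)]
    (hquo : ∀ i j : I, i ≠ j →
      ∀ (S : Type) [Group S] [Finite S] [IsSimpleGroup S],
        (¬ ∀ a b : S, a * b = b * a) →
        ¬ ((∃ f : G i →* S, @Continuous (G i) S _ ⊥ f ∧ Function.Surjective f) ∧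
           (∃ g : G j →* S, @Continuous (G j) S _ ⊥ g ∧ Function.Surjective g)))
    (H : Subgroup (∀ i, G i)) (hclosed : IsClosed (H : Set (∀ i, G i)))
    (hproj : ∀ i, H.map (Pi.evalMonoidHom G i) = ⊤)
    (hab : H.map (QuotientGroup.mk' (commutator (∀ i, G i)).topologicalClosure) = ⊤) :
    H = ⊤ := by
  have hdense : Dense (H : Set (∀ i, G i)) :=
    Subgroup.dense_of_forall_map_restrictQuotientMonoidHom_eq_top fun F N => by
      refine Subgroup.eq_top_of_sup_commutator_eq_top (Q := fun i : F => G i ⧸ (N i).toSubgroup)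
        (fun i j hij => not_surjective_of_common_nonabelian_simple_quotient hquo
          (Subtype.coe_injective.ne hij) (N i) (N j)) (fun i => ?_)
        (H.map_sup_commutator_eq_top hab (Pi.continuous_restrictQuotientMonoidHom _ N)
          (Pi.restrictQuotientMonoidHom_surjective _ N))
      rw [Subgroup.map_map]
      change H.map ((QuotientGroup.mk' (N i).toSubgroup).comp (Pi.evalMonoidHom G i)) = ⊤
      rw [← Subgroup.map_map, hproj,
        Subgroup.map_top_of_surjective _ (QuotientGroup.mk'_surjective _)]
  exact Subgroup.coe_eq_univ.mp (hclosed.closure_eq ▸ hdense.closure_eq)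

/-- If `(G i)` is a family of profinite groups such that no finite nonabelian simple
group is a continuous quotient of two distinct members, and `H` is a closed subgroup
of the product that surjects onto each factor and onto the quotient by the closure of
the commutator subgroup, then `H` is the whole product. -/
theorem stmt0 {I : Type*} (G : I → Type*) [∀ i, Group (G i)]
    [∀ i, TopologicalSpace (G i)] [∀ i, IsTopologicalGroup (G i)]
    [∀ i, CompactSpace (G i)] [∀ i, T2Space (G i)]
    [∀ i, TotallyDisconnectedSpace (G i)]
    (hquo : ∀ i j : I, i ≠ j →
      ∀ (S : Type) [Group S] [Finite S] [IsSimpleGroup S],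
        (¬ ∀ a b : S, a * b = b * a) →
        ¬ ((∃ f : G i →* S, @Continuous (G i) S _ ⊥ f ∧ Function.Surjective f) ∧
           (∃ g : G j →* S, @Continuous (G j) S _ ⊥ g ∧ Function.Surjective g)))
    (H : Subgroup (∀ i, G i)) (hclosed : IsClosed (H : Set (∀ i, G i)))
    (hproj : ∀ i, H.map (Pi.evalMonoidHom G i) = ⊤)
    (hab : H.map (QuotientGroup.mk' (commutator (∀ i, G i)).topologicalClosure) = ⊤) :
    H = ⊤ :=
  stmt0_general G hquo H hclosed hproj hab
end

section
/- Let U be a closed subgroup of GL₂(ℤ₂) with U ⊆ V₁(2). Suppose U surjects onto V₁(2)/V₃(2); that is, for every A ∈ V₁(2) there exists u ∈ U such that u and A have the same reduction mod 8. Then U = V₁(2). -/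
open Matrix

/-- The reduction-mod-`p^k` homomorphism `GL₂(ℤ_p) →* GL₂(ℤ/p^kℤ)`. -/
noncomputable def glReductionPow (p : ℕ) [Fact p.Prime] (k : ℕ) :
    GL (Fin 2) ℤ_[p] →* GL (Fin 2) (ZMod (p ^ k)) :=
  Matrix.GeneralLinearGroup.map (PadicInt.toZModPow k)

/-- `V_k(p)`, the kernel of reduction mod `p^k`, as a subgroup of `GL₂(ℤ_p)`. -/
noncomputable def Vsub (p : ℕ) [Fact p.Prime] (k : ℕ) : Subgroup (GL (Fin 2) ℤ_[p]) :=
  (glReductionPow p k).ker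

open Filter Topology

/-!
The subgroups `V_k = 1 + 2^k M₂(ℤ₂)` form a neighbourhood basis of `1`, so as `U` is closed it
suffices to show that `U` surjects onto `V₁/V_k` for every `k ≥ 3`, by induction on `k`.
Two congruences for squares drive the induction step. If `D ≡ 1 mod 2^k` with `k ≥ 3`, then
`S = 1 + (D - 1)/2` satisfies `S ≡ 1 mod 2` and `S² ≡ D mod 2^(k+1)`; and if `X ≡ Y mod 2^k`
with `k ≥ 1` and `Y ≡ 1 mod 2`, then `X² ≡ Y² mod 2^(k+1)`. So if `v ∈ U` approximates `S`
modulo `2^k`, then `v² ∈ U` approximates `D` modulo `2^(k+1)`.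
-/

section Ring

variable {A : Type*} [Ring A]

theorem two_pow_succ_dvd_sq_sub_sq {k : ℕ} (hk : 1 ≤ k) {X Y : A}
    (hXY : (2 : A) ^ k ∣ X - Y) (hY : (2 : A) ∣ Y - 1) : (2 : A) ^ (k + 1) ∣ X ^ 2 - Y ^ 2 := by
  obtain ⟨m, rfl⟩ := Nat.exists_eq_add_of_le' hk
  obtain ⟨C, hC⟩ := hXY
  obtain ⟨E, hE⟩ := hY
  rw [sub_eq_iff_eq_add] at hC hE
  subst hC hE
  refine ⟨C + E * C + C * E + 2 ^ m * C * C, ?_⟩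
  -- as a natural-number cast, `2 ^ m` is central, which `noncomm_ring` can then exploit
  have h2 : (2 : A) ^ m = ((2 ^ m : ℕ) : A) := by push_cast; rfl
  simp only [pow_succ, h2]
  noncomm_ring
  simp only [← nsmul_eq_mul, mul_smul_comm, smul_smul]
  abel

theorem exists_two_dvd_sub_one_two_pow_dvd_sq_sub {k : ℕ} (hk : 3 ≤ k) {D : A}
    (hD : (2 : A) ^ k ∣ D - 1) : ∃ S, (2 : A) ∣ S - 1 ∧ (2 : A) ^ (k + 1) ∣ S ^ 2 - D := by
  obtain ⟨m, rfl⟩ := Nat.exists_eq_add_of_le' hk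
  obtain ⟨C, hC⟩ := hD
  rw [sub_eq_iff_eq_add] at hC
  subst hC
  refine ⟨1 + 2 ^ (m + 2) * C, ⟨2 ^ (m + 1) * C, by noncomm_ring⟩, 2 ^ m * C * C, ?_⟩
  have h2 : (2 : A) ^ m = ((2 ^ m : ℕ) : A) := by push_cast; rfl
  simp only [pow_succ, h2]
  noncomm_ring
  simp only [← nsmul_eq_mul, mul_smul_comm, smul_smul]

end Ring

theorem Dvd.dvd.mul_left_of_commute {A : Type*} [Monoid A] {a x : A} (h : a ∣ x) (y : A)
    (hc : Commute a y) : a ∣ y * x := by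
  obtain ⟨z, rfl⟩ := h
  exact ⟨y * z, by rw [← mul_assoc, ← mul_assoc, hc.eq]⟩

namespace Matrix

variable {n : Type*} [Fintype n] [DecidableEq n]

theorem natCast_pow_dvd_iff {R : Type*} [CommRing R] (p k : ℕ) (X : Matrix n n R) :
    (p : Matrix n n R) ^ k ∣ X ↔ ∀ i j, (p : R) ^ k ∣ X i j := by
  have hmul : ∀ C : Matrix n n R, (p : Matrix n n R) ^ k * C = (p : R) ^ k • C := by
    intro C
    rw [← Nat.cast_pow, ← nsmul_eq_mul, ← Nat.cast_pow, Nat.cast_smul_eq_nsmul]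
  constructor
  · rintro ⟨C, rfl⟩ i j
    rw [hmul, smul_apply, smul_eq_mul]
    exact dvd_mul_right _ _
  · intro h
    choose C hC using h
    exact ⟨of C, by ext i j; rw [hmul, smul_apply, smul_eq_mul, of_apply, hC]⟩

variable {p : ℕ} [hp : Fact p.Prime]

theorem isUnit_of_natCast_dvd_sub_one {X : Matrix n n ℤ_[p]}
    (h : (p : Matrix n n ℤ_[p]) ∣ X - 1) : IsUnit X := by
  have hX : PadicInt.toZMod.mapMatrix X = 1 := by
    obtain ⟨C, hC⟩ := h
    rw [← sub_eq_zero, ← map_one PadicInt.toZMod.mapMatrix, ← map_sub, hC, map_mul,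
      map_natCast, ← diagonal_natCast, ZMod.natCast_self, diagonal_zero, zero_mul]
  rw [isUnit_iff_isUnit_det, ← IsLocalRing.notMem_maximalIdeal, ← PadicInt.ker_toZMod,
    RingHom.mem_ker, RingHom.map_det, hX, det_one]
  exact one_ne_zero

theorem tendsto_of_natCast_pow_dvd_sub {X : ℕ → Matrix n n ℤ_[p]} {L : Matrix n n ℤ_[p]}
    (h : ∀ k, (p : Matrix n n ℤ_[p]) ^ k ∣ X k - L) : Tendsto X atTop (𝓝 L) := by
  refine tendsto_pi_nhds.2 fun i => tendsto_pi_nhds.2 fun j => ?_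
  rw [tendsto_iff_norm_sub_tendsto_zero]
  refine squeeze_zero (g := fun k => ((p : ℝ)⁻¹) ^ k) (fun _ => norm_nonneg _) (fun k => ?_)
    (tendsto_pow_atTop_nhds_zero_of_lt_one (by positivity)
      (inv_lt_one_of_one_lt₀ (by exact_mod_cast hp.out.one_lt)))
  have hk := (PadicInt.norm_le_pow_iff_mem_span_pow _ k).2
    (Ideal.mem_span_singleton.2 ((natCast_pow_dvd_iff p k _).1 (h k) i j))
  simpa [zpow_neg, inv_pow] using hk

end Matrix

section Congruence

variable {p : ℕ} [Fact p.Prime] {k : ℕ}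

theorem mem_Vsub_iff {g : GL (Fin 2) ℤ_[p]} :
    g ∈ Vsub p k ↔
      (p : Matrix (Fin 2) (Fin 2) ℤ_[p]) ^ k ∣ (g : Matrix (Fin 2) (Fin 2) ℤ_[p]) - 1 := by
  rw [Matrix.natCast_pow_dvd_iff, Vsub, MonoidHom.mem_ker, glReductionPow, Units.ext_iff,
    ← sub_eq_zero]
  simp only [← Ideal.mem_span_singleton, ← PadicInt.ker_toZModPow, RingHom.mem_ker]
  rw [← Matrix.ext_iff]
  simp [Matrix.GeneralLinearGroup.map, Matrix.one_apply, apply_ite]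

theorem inv_mul_mem_Vsub_iff {g h : GL (Fin 2) ℤ_[p]} :
    g⁻¹ * h ∈ Vsub p k ↔
      (p : Matrix (Fin 2) (Fin 2) ℤ_[p]) ^ k ∣ (h : Matrix (Fin 2) (Fin 2) ℤ_[p]) - g := by
  have hc (X : Matrix (Fin 2) (Fin 2) ℤ_[p]) : Commute ((p : Matrix (Fin 2) (Fin 2) ℤ_[p]) ^ k) X :=
    (Nat.cast_commute p X).pow_left k
  rw [mem_Vsub_iff]
  constructor <;> intro hdvd
  · convert hdvd.mul_left_of_commute _ (hc g) using 1
    rw [mul_sub, mul_one, ← Units.val_mul, mul_inv_cancel_left]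
  · convert hdvd.mul_left_of_commute _ (hc ↑g⁻¹) using 1
    rw [mul_sub, ← Units.val_mul, ← Units.val_mul, inv_mul_cancel, Units.val_one]

theorem Vsub_antitone : Antitone (Vsub p) := fun _ _ hkl _ hg =>
  mem_Vsub_iff.2 ((pow_dvd_pow _ hkl).trans (mem_Vsub_iff.1 hg))

theorem tendsto_nhds_one_of_mem_Vsub {h : ℕ → GL (Fin 2) ℤ_[p]} (hh : ∀ k, h k ∈ Vsub p k) :
    Tendsto h atTop (𝓝 1) := by
  have hval {h : ℕ → GL (Fin 2) ℤ_[p]} (hh : ∀ k, h k ∈ Vsub p k) :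
      Tendsto (fun k => (h k : Matrix (Fin 2) (Fin 2) ℤ_[p])) atTop (𝓝 1) :=
    Matrix.tendsto_of_natCast_pow_dvd_sub fun k => mem_Vsub_iff.1 (hh k)
  rw [Units.isInducing_embedProduct.tendsto_nhds_iff]
  exact (hval hh).prodMk_nhds ((MulOpposite.continuous_op.tendsto _).comp
    (hval fun k => inv_mem (hh k)))

theorem tendsto_of_inv_mul_mem_Vsub {u : ℕ → GL (Fin 2) ℤ_[p]} {g : GL (Fin 2) ℤ_[p]}
    (hu : ∀ k, (u k)⁻¹ * g ∈ Vsub p k) : Tendsto u atTop (𝓝 g) := by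
  simpa using tendsto_const_nhds (x := g) |>.mul (tendsto_nhds_one_of_mem_Vsub hu).inv

end Congruence

section Lifting

variable {U : Subgroup (GL (Fin 2) ℤ_[2])}

theorem exists_inv_mul_mem_Vsub_two_succ (hsub : U ≤ Vsub 2 1) {k : ℕ} (hk : 3 ≤ k)
    (hU : ∀ g ∈ Vsub 2 1, ∃ u ∈ U, u⁻¹ * g ∈ Vsub 2 k) :
    ∀ g ∈ Vsub 2 1, ∃ u ∈ U, u⁻¹ * g ∈ Vsub 2 (k + 1) := by
  intro g hg
  obtain ⟨u, hu, hug⟩ := hU g hg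
  obtain ⟨S, hS1, hS2⟩ := exists_two_dvd_sub_one_two_pow_dvd_sq_sub hk
    (by simpa only [Nat.cast_ofNat] using mem_Vsub_iff.1 hug)
  set s : GL (Fin 2) ℤ_[2] := (Matrix.isUnit_of_natCast_dvd_sub_one (p := 2)
    (by simpa only [Nat.cast_ofNat] using hS1)).unit
  have hs : (s : Matrix (Fin 2) (Fin 2) ℤ_[2]) = S := IsUnit.unit_spec _
  obtain ⟨v, hv, hvs⟩ := hU s (mem_Vsub_iff.2 (by simpa only [Nat.cast_ofNat, pow_one, hs]))
  have hsq := two_pow_succ_dvd_sq_sub_sq (k := k) (by omega)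
    (by simpa only [Nat.cast_ofNat, hs] using inv_mul_mem_Vsub_iff.1 hvs)
    (by simpa only [Nat.cast_ofNat, pow_one] using mem_Vsub_iff.1 (hsub hv))
  refine ⟨u * v ^ 2, mul_mem hu (pow_mem hv 2), ?_⟩
  rw [_root_.mul_inv_rev, mul_assoc, inv_mul_mem_Vsub_iff]
  simpa only [Nat.cast_ofNat, Units.val_pow_eq_pow_val, sub_sub_sub_cancel_left] using hsq.sub hS2

theorem exists_inv_mul_mem_Vsub_two (hsub : U ≤ Vsub 2 1)
    (h3 : ∀ g ∈ Vsub 2 1, ∃ u ∈ U, u⁻¹ * g ∈ Vsub 2 3) {k : ℕ} (hk : 3 ≤ k) :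
    ∀ g ∈ Vsub 2 1, ∃ u ∈ U, u⁻¹ * g ∈ Vsub 2 k := by
  induction k, hk using Nat.le_induction with
  | base => exact h3
  | succ k hk ih => exact exists_inv_mul_mem_Vsub_two_succ hsub hk ih

end Lifting

/-- A closed subgroup of `V₁(2)` surjecting onto `V₁(2)/V₃(2)` equals `V₁(2)`. -/
theorem stmt1 (U : Subgroup (GL (Fin 2) ℤ_[2]))
    (hclosed : IsClosed (U : Set (GL (Fin 2) ℤ_[2])))
    (hsub : U ≤ Vsub 2 1)
    (hsurj : ∀ A ∈ Vsub 2 1, ∃ u ∈ U, glReductionPow 2 3 u = glReductionPow 2 3 A) :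
    U = Vsub 2 1 := by
  refine le_antisymm hsub fun A hA => ?_
  have h3 (B : GL (Fin 2) ℤ_[2]) (hB : B ∈ Vsub 2 1) : ∃ u ∈ U, u⁻¹ * B ∈ Vsub 2 3 := by
    obtain ⟨u, hu, huB⟩ := hsurj B hB
    exact ⟨u, hu, (glReductionPow 2 3).eq_iff.1 huB.symm⟩
  choose u hu huA using fun k => exists_inv_mul_mem_Vsub_two hsub h3 (Nat.le_add_left 3 k) A hA
  exact hclosed.mem_of_tendsto
    (tendsto_of_inv_mul_mem_Vsub fun k => Vsub_antitone (Nat.le_add_right k 3) (huA k))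
    (.of_forall hu)
end

section
/- Let ℓ ≥ 5 be a prime and let H be a closed subgroup of GL₂(ℤ_ℓ) all of whose elements have determinant 1 (i.e., a closed subgroup of SL₂(ℤ_ℓ)). Suppose H surjects onto SL₂(𝔽_ℓ) under reduction mod ℓ; that is, for every A ∈ GL₂(ℤ_ℓ) with det A = 1 there exists h ∈ H such that h and A have the same reduction mod ℓ. Then H = SL₂(ℤ_ℓ), i.e., H contains every element of GL₂(ℤ_ℓ) of determinant 1. -/
open Matrix

/-- The reduction-mod-`p` homomorphism `GL₂(ℤ_p) →* GL₂(𝔽_p)`. -/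
noncomputable def glReduction (p : ℕ) [Fact p.Prime] :
    GL (Fin 2) ℤ_[p] →* GL (Fin 2) (ZMod p) :=
  Matrix.GeneralLinearGroup.map (PadicInt.toZMod)

/-!
Serre's lemma. For `n ≥ 1` consider the matrices `Z` such that `1 + pⁿ Z` is congruent modulo
`pⁿ⁺¹` to an element of `H`. Modulo `p` they form an `𝔽_p`-subspace stable under conjugation by
`SL₂`, and commutators of elements of `H` show that the bracket of levels `n` and `1` lands in
level `n + 1`. If `g ∈ H` lifts `[[1, 1], [0, 1]]`, then `g ^ p ≡ 1 + p e (mod p²)`, which needs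
`p ≥ 5`; so `e` lies in level `1`, conjugation gives the whole of `sl₂(𝔽_p)`, and the relations
`[h, e] = 2e`, `[h, f] = -2f`, `[e, f] = h` push `sl₂(𝔽_p)` to every level. Successive
approximation then shows that `H` is dense in `SL₂(ℤ_p)`, and `H` is closed.
-/

section PthPower

open Finset

variable {R : Type*} [Ring R]

theorem add_pow_eq_add_sum_of_mul_mul_eq_zero (u t : R) (ht : ∀ m : R, t * m * t = 0) (k : ℕ) :
    (u + t) ^ k = u ^ k + ∑ i ∈ range k, u ^ i * t * u ^ (k - 1 - i) := by
  induction k with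
  | zero => simp
  | succ k ih =>
    have hmul_t : (∑ i ∈ range k, u ^ i * t * u ^ (k - 1 - i)) * t = 0 := by
      rw [sum_mul]
      exact sum_eq_zero fun i _ => by rw [mul_assoc, mul_assoc, ← mul_assoc t, ht, mul_zero]
    have hmul_u : (∑ i ∈ range k, u ^ i * t * u ^ (k - 1 - i)) * u
        = ∑ i ∈ range k, u ^ i * t * u ^ (k + 1 - 1 - i) := by
      rw [sum_mul]
      refine sum_congr rfl fun i hi => ?_
      rw [mul_assoc, ← pow_succ, show k - 1 - i + 1 = k + 1 - 1 - i by
        have := mem_range.mp hi; omega]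
    rw [pow_succ, ih, add_mul, mul_add, mul_add, hmul_t, hmul_u, sum_range_succ, pow_succ]
    simp only [Nat.add_sub_cancel, Nat.sub_self, pow_zero, mul_one]
    abel

theorem one_add_pow_of_mul_self_eq_zero {e : R} (he : e * e = 0) (k : ℕ) :
    (1 + e) ^ k = 1 + k * e := by
  induction k with
  | zero => simp
  | succ k ih =>
    rw [pow_succ, ih, mul_add, mul_one, add_mul, mul_assoc, he]
    push_cast
    noncomm_ring

theorem Nat.sum_range_mul_sub_eq_choose_three (n : ℕ) :
    ∑ i ∈ range n, i * (n - 1 - i) = n.choose 3 := by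
  induction n with
  | zero => simp
  | succ n ih =>
    have hsplit : ∀ i ∈ range n, i * (n + 1 - 1 - i) = i * (n - 1 - i) + i := by
      intro i hi
      have := mem_range.mp hi
      rw [← Nat.mul_succ]; congr 1; omega
    rw [sum_range_succ, sum_congr rfl hsplit, sum_add_distrib, ih, sum_range_id,
      ← Nat.choose_two_right, Nat.choose_succ_succ' n 2, Nat.add_sub_cancel, Nat.sub_self, mul_zero,
      add_zero, add_comm]

theorem sum_range_one_add_pow_mul_mul_one_add_pow {e : R} (he : e * e = 0) (b : R) (n : ℕ) :
    ∑ i ∈ range n, (1 + e) ^ i * b * (1 + e) ^ (n - 1 - i) =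
      n * b + n.choose 2 * (e * b) + n.choose 2 * (b * e) + n.choose 3 * (e * b * e) := by
  have hterm : ∀ i ∈ range n, (1 + e) ^ i * b * (1 + e) ^ (n - 1 - i) =
      b + i * (e * b) + ((n - 1 - i : ℕ) : R) * (b * e) +
        ((i * (n - 1 - i) : ℕ) : R) * (e * b * e) := by
    intro i _
    simp only [one_add_pow_of_mul_self_eq_zero he, add_mul, mul_add, one_mul, mul_one, mul_assoc,
      Nat.cast_mul, (Nat.cast_commute (n - 1 - i) b).symm.left_comm,
      (Nat.cast_commute (n - 1 - i) e).symm.left_comm]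
    abel
  simp only [sum_congr rfl hterm, sum_add_distrib, ← sum_mul, ← Nat.cast_sum, sum_const,
    card_range, nsmul_eq_mul]
  rw [← Nat.cast_sum, sum_range_reflect (fun i => i) n, Nat.sum_range_mul_sub_eq_choose_three,
    sum_range_id, ← Nat.choose_two_right]

theorem one_add_add_mul_pow_prime {p : ℕ} (hp : p.Prime) (hp5 : 5 ≤ p) (hR : (p : R) ^ 2 = 0)
    {e : R} (he : e * e = 0) (b : R) :
    (1 + e + p * b) ^ p = 1 + p * e := by
  have hp_mul : ∀ {k : ℕ}, p ∣ k → ∀ x : R, p * (k * x) = 0 := by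
    rintro _ ⟨m, rfl⟩ x
    rw [Nat.cast_mul, ← mul_assoc, ← mul_assoc, ← sq, hR, zero_mul, zero_mul]
  have hsq (m : R) : p * b * m * (p * b) = 0 := by
    rw [← mul_assoc, ← Nat.cast_comm p (p * b * m), mul_assoc, mul_assoc, mul_assoc,
      hp_mul dvd_rfl]
  have hpull (i : ℕ) : (1 + e) ^ i * (p * b) * (1 + e) ^ (p - 1 - i) =
      p * ((1 + e) ^ i * b * (1 + e) ^ (p - 1 - i)) := by
    rw [← mul_assoc _ (p : R), ← Nat.cast_comm p]
    simp only [mul_assoc]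
  rw [add_pow_eq_add_sum_of_mul_mul_eq_zero _ _ hsq, one_add_pow_of_mul_self_eq_zero he]
  -- `p` divides `p.choose 3` only because `3 < p`.
  simp only [hpull, ← mul_sum, sum_range_one_add_pow_mul_mul_one_add_pow he, mul_add,
    hp_mul dvd_rfl, hp_mul (hp.dvd_choose_self two_ne_zero (by omega)),
    hp_mul (hp.dvd_choose_self three_ne_zero (by omega)), add_zero]

end PthPower

theorem PadicInt.toZModPow_eq_iff_dvd {p : ℕ} [Fact p.Prime] {n : ℕ} {x y : ℤ_[p]} :
    toZModPow n x = toZModPow n y ↔ (p : ℤ_[p]) ^ n ∣ x - y := by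
  rw [← sub_eq_zero, ← map_sub, ← RingHom.mem_ker, ker_toZModPow, Ideal.mem_span_singleton]

theorem PadicInt.toZMod_eq_iff_dvd {p : ℕ} [Fact p.Prime] {x y : ℤ_[p]} :
    toZMod x = toZMod y ↔ (p : ℤ_[p]) ∣ x - y := by
  rw [← sub_eq_zero, ← map_sub, ← RingHom.mem_ker, ker_toZMod, maximalIdeal_eq_span_p,
    Ideal.mem_span_singleton]

theorem PadicInt.norm_sub_le_of_toZModPow_eq {p : ℕ} [Fact p.Prime] {n : ℕ} {x y : ℤ_[p]}
    (h : toZModPow n x = toZModPow n y) : ‖x - y‖ ≤ ((p : ℝ)⁻¹) ^ n := by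
  rw [inv_pow, ← zpow_natCast, ← _root_.zpow_neg, norm_le_pow_iff_mem_span_pow,
    Ideal.mem_span_singleton]
  exact toZModPow_eq_iff_dvd.mp h

theorem PadicInt.isUnit_natCast_of_coprime {p : ℕ} [Fact p.Prime] {k : ℕ} (hk : p.Coprime k) :
    IsUnit (k : ℤ_[p]) :=
  isUnit_iff.mpr (norm_natCast_eq_one_iff.mpr hk)

section CongruenceLayer

open Filter Topology

variable {p : ℕ} [Fact p.Prime] {ι : Type*} [Fintype ι] [DecidableEq ι]

local notation "𝕄" => Matrix ι ι ℤ_[p]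

noncomputable abbrev matrixToZModPow (n : ℕ) : 𝕄 →+* Matrix ι ι (ZMod (p ^ n)) :=
  (PadicInt.toZModPow n).mapMatrix

theorem matrixToZModPow_eq_iff {n : ℕ} {A B : 𝕄} :
    matrixToZModPow n A = matrixToZModPow n B ↔ ∃ C, A = B + (p : ℤ_[p]) ^ n • C := by
  constructor
  · intro h
    have hdvd (i j : ι) : (p : ℤ_[p]) ^ n ∣ A i j - B i j :=
      PadicInt.toZModPow_eq_iff_dvd.mp (congrFun₂ h i j)
    choose C hC using hdvd
    exact ⟨Matrix.of C, by ext i j; simp [← hC]⟩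
  · rintro ⟨C, rfl⟩
    ext i j
    exact PadicInt.toZModPow_eq_iff_dvd.mpr ⟨C i j, by simp⟩

theorem matrixToZModPow_pow_smul {m k : ℕ} (h : m ≤ k) (C : 𝕄) :
    matrixToZModPow m ((p : ℤ_[p]) ^ k • C) = 0 := by
  rw [← map_zero (matrixToZModPow m), matrixToZModPow_eq_iff]
  exact ⟨(p : ℤ_[p]) ^ (k - m) • C, by rw [zero_add, smul_smul, ← pow_add, Nat.add_sub_cancel' h]⟩

theorem matrixToZModPow_eq_of_le {m n : ℕ} (h : m ≤ n) {A B : 𝕄}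
    (hAB : matrixToZModPow n A = matrixToZModPow n B) :
    matrixToZModPow m A = matrixToZModPow m B := by
  obtain ⟨C, rfl⟩ := matrixToZModPow_eq_iff.mp hAB
  rw [map_add, matrixToZModPow_pow_smul h, add_zero]

theorem matrixToZModPow_pow_smul_eq {Z Z' : 𝕄} (h : matrixToZModPow 1 Z = matrixToZModPow 1 Z')
    (n : ℕ) : matrixToZModPow (n + 1) ((p : ℤ_[p]) ^ n • Z) =
      matrixToZModPow (n + 1) ((p : ℤ_[p]) ^ n • Z') := by
  obtain ⟨C, rfl⟩ := matrixToZModPow_eq_iff.mp h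
  rw [smul_add, smul_smul, pow_one, ← pow_succ, map_add, matrixToZModPow_pow_smul le_rfl, add_zero]

theorem matrixToZModPow_inv_eq {n : ℕ} {g h : GL ι ℤ_[p]}
    (hgh : matrixToZModPow n (g : 𝕄) = matrixToZModPow n h) :
    matrixToZModPow n (↑g⁻¹ : 𝕄) = matrixToZModPow n ↑h⁻¹ := by
  have hmap : GeneralLinearGroup.map (PadicInt.toZModPow n) g =
      GeneralLinearGroup.map (PadicInt.toZModPow n) h := Units.ext hgh
  have := congrArg (fun u : GL ι (ZMod (p ^ n)) => (↑u⁻¹ : Matrix ι ι (ZMod (p ^ n)))) hmap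
  rwa [← map_inv, ← map_inv] at this

theorem matrixToZModPow_one_inv_eq_one {n : ℕ} (hn : 1 ≤ n) {Z : 𝕄} {g : GL ι ℤ_[p]}
    (hg : matrixToZModPow (n + 1) (g : 𝕄) = matrixToZModPow (n + 1) (1 + (p : ℤ_[p]) ^ n • Z)) :
    matrixToZModPow 1 (↑g⁻¹ : 𝕄) = 1 := by
  have hg1 : matrixToZModPow 1 (g : 𝕄) = matrixToZModPow 1 ↑(1 : GL ι ℤ_[p]) := by
    rw [matrixToZModPow_eq_of_le (by omega) hg, map_add, matrixToZModPow_pow_smul hn, add_zero,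
      Units.val_one]
  rw [matrixToZModPow_inv_eq hg1, inv_one, Units.val_one, map_one]

theorem tendsto_of_matrixToZModPow_eq {f : ℕ → 𝕄} {L : 𝕄}
    (hf : ∀ n, matrixToZModPow n (f n) = matrixToZModPow n L) : Tendsto f atTop (𝓝 L) := by
  have hp : (p : ℝ)⁻¹ < 1 := inv_lt_one_of_one_lt₀ (mod_cast (Fact.out : p.Prime).one_lt)
  refine tendsto_pi_nhds.mpr fun i => tendsto_pi_nhds.mpr fun j => ?_
  rw [tendsto_iff_norm_sub_tendsto_zero]
  refine squeeze_zero (fun _ => norm_nonneg _) (fun n => ?_)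
    (tendsto_pow_atTop_nhds_zero_of_lt_one (by positivity) hp)
  exact PadicInt.norm_sub_le_of_toZModPow_eq (congrFun₂ (hf n) i j)

theorem Subgroup.mem_of_isClosed_of_forall_matrixToZModPow_eq {H : Subgroup (GL ι ℤ_[p])}
    (hH : IsClosed (H : Set (GL ι ℤ_[p]))) {A : GL ι ℤ_[p]}
    (hA : ∀ n, ∃ h ∈ H, matrixToZModPow n (h : 𝕄) = matrixToZModPow n (A : 𝕄)) : A ∈ H := by
  choose h hmem hhA using hA
  have htends : Tendsto h atTop (𝓝 A) := by
    rw [Units.isEmbedding_embedProduct.tendsto_nhds_iff]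
    exact (tendsto_of_matrixToZModPow_eq hhA).prodMk_nhds
      (MulOpposite.continuous_op.continuousAt.tendsto.comp
        (tendsto_of_matrixToZModPow_eq fun n => matrixToZModPow_inv_eq (hhA n)))
  exact hH.mem_of_tendsto htends (Eventually.of_forall hmem)

/-- Lifts to `ℤ_[p]` of the image of `H ∩ (1 + pⁿ M)` in `(1 + pⁿ M) / (1 + pⁿ⁺¹ M) ≃ M(𝔽_p)`,
where `M` is the matrix ring over `ℤ_[p]`. -/
def congruenceLayer (H : Subgroup (GL ι ℤ_[p])) (n : ℕ) : Set 𝕄 :=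
  {Z | ∃ h ∈ H, matrixToZModPow (n + 1) (h : 𝕄) = matrixToZModPow (n + 1) (1 + (p : ℤ_[p]) ^ n • Z)}

def MapsOntoSLModP (H : Subgroup (GL ι ℤ_[p])) : Prop :=
  ∀ s : SpecialLinearGroup ι ℤ_[p], ∃ h ∈ H, matrixToZModPow 1 (h : 𝕄) = matrixToZModPow 1 (s : 𝕄)

namespace congruenceLayer

variable {H : Subgroup (GL ι ℤ_[p])} {n : ℕ}

theorem zero_mem : (0 : 𝕄) ∈ congruenceLayer H n :=
  ⟨1, H.one_mem, by simp⟩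

theorem mem_of_mod_p_eq {Z Z' : 𝕄} (hZ : Z ∈ congruenceLayer H n)
    (h : matrixToZModPow 1 Z = matrixToZModPow 1 Z') : Z' ∈ congruenceLayer H n := by
  obtain ⟨g, hg, hgZ⟩ := hZ
  exact ⟨g, hg, by rw [hgZ, map_add, map_add, matrixToZModPow_pow_smul_eq h]⟩

theorem add_mem (hn : 1 ≤ n) {Z Z' : 𝕄} (hZ : Z ∈ congruenceLayer H n)
    (hZ' : Z' ∈ congruenceLayer H n) : Z + Z' ∈ congruenceLayer H n := by
  obtain ⟨g, hg, hgZ⟩ := hZ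
  obtain ⟨g', hg', hgZ'⟩ := hZ'
  refine ⟨g * g', H.mul_mem hg hg', ?_⟩
  have hexpand : (1 + (p : ℤ_[p]) ^ n • Z) * (1 + (p : ℤ_[p]) ^ n • Z') =
      1 + (p : ℤ_[p]) ^ n • (Z + Z') + (p : ℤ_[p]) ^ (n + n) • (Z * Z') := by
    simp only [add_mul, mul_add, one_mul, mul_one, smul_mul_smul_comm, ← pow_add, smul_add]
    abel
  rw [Units.val_mul, map_mul, hgZ, hgZ', ← map_mul, hexpand,
    map_add _ _ ((p : ℤ_[p]) ^ (n + n) • _), matrixToZModPow_pow_smul (by omega), add_zero]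

theorem nsmul_mem (hn : 1 ≤ n) {Z : 𝕄} (hZ : Z ∈ congruenceLayer H n) (k : ℕ) :
    k • Z ∈ congruenceLayer H n := by
  induction k with
  | zero => rw [zero_nsmul]; exact zero_mem
  | succ k ih => rw [succ_nsmul]; exact add_mem hn ih hZ

theorem smul_mem (hn : 1 ≤ n) {Z : 𝕄} (hZ : Z ∈ congruenceLayer H n) (c : ℤ_[p]) :
    c • Z ∈ congruenceLayer H n := by
  obtain ⟨d, hd⟩ := Ideal.mem_span_singleton'.mp (PadicInt.appr_spec 1 c)
  refine mem_of_mod_p_eq (nsmul_mem hn hZ (c.appr 1)) (matrixToZModPow_eq_iff.mpr ⟨-(d • Z), ?_⟩)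
  rw [← Nat.cast_smul_eq_nsmul ℤ_[p]]
  linear_combination (norm := module) hd • Z

theorem mem_of_nsmul_mem (hn : 1 ≤ n) {k : ℕ} (hk : p.Coprime k) {Z : 𝕄}
    (hZ : k • Z ∈ congruenceLayer H n) : Z ∈ congruenceLayer H n := by
  obtain ⟨u, hu⟩ := PadicInt.isUnit_natCast_of_coprime hk
  have := smul_mem hn hZ ↑u⁻¹
  rwa [← Nat.cast_smul_eq_nsmul ℤ_[p], smul_smul, ← hu, Units.inv_mul, one_smul] at this

theorem conj_mem {Z : 𝕄} (hZ : Z ∈ congruenceLayer H n) {g : GL ι ℤ_[p]} (hg : g ∈ H) :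
    (g : 𝕄) * Z * (↑g⁻¹ : 𝕄) ∈ congruenceLayer H n := by
  obtain ⟨k, hk, hkZ⟩ := hZ
  refine ⟨g * k * g⁻¹, H.mul_mem (H.mul_mem hg hk) (H.inv_mem hg), ?_⟩
  have hconj : (g : 𝕄) * (1 + (p : ℤ_[p]) ^ n • Z) * (↑g⁻¹ : 𝕄) =
      1 + (p : ℤ_[p]) ^ n • ((g : 𝕄) * Z * (↑g⁻¹ : 𝕄)) := by
    rw [mul_add, mul_one, add_mul, Units.mul_inv, mul_smul_comm, smul_mul_assoc]
  rw [Units.val_mul, Units.val_mul, map_mul, map_mul, hkZ, ← map_mul, ← map_mul, hconj]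

theorem conj_mem_of_mapsOntoSLModP (hsurj : MapsOntoSLModP H) {Z : 𝕄}
    (hZ : Z ∈ congruenceLayer H n) (s : SpecialLinearGroup ι ℤ_[p]) :
    (s : 𝕄) * Z * adjugate (s : 𝕄) ∈ congruenceLayer H n := by
  obtain ⟨h, hh, hhs⟩ := hsurj s
  refine mem_of_mod_p_eq (conj_mem hZ hh) ?_
  have hinv := matrixToZModPow_inv_eq (h := SpecialLinearGroup.toGL s) hhs
  rw [← map_inv] at hinv
  rw [← Matrix.SpecialLinearGroup.coe_inv]
  simp only [map_mul, hhs, hinv]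
  rfl

theorem commutator_mem {a : ℕ} (ha : 1 ≤ a) {X Y : 𝕄} (hX : X ∈ congruenceLayer H a)
    (hY : Y ∈ congruenceLayer H 1) : X * Y - Y * X ∈ congruenceLayer H (a + 1) := by
  obtain ⟨g, hg, hgX⟩ := hX
  obtain ⟨k, hk, hkY⟩ := hY
  obtain ⟨A, hA⟩ := matrixToZModPow_eq_iff.mp hgX
  obtain ⟨B, hB⟩ := matrixToZModPow_eq_iff.mp hkY
  refine ⟨g * k * g⁻¹ * k⁻¹,
    H.mul_mem (H.mul_mem (H.mul_mem hg hk) (H.inv_mem hg)) (H.inv_mem hk), ?_⟩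
  set D := X * B - B * X + (A * Y - Y * A) + (p : ℤ_[p]) • (A * B - B * A)
  have hcomm : (g * k : 𝕄) - k * g = (p : ℤ_[p]) ^ (a + 1) • (X * Y - Y * X + (p : ℤ_[p]) • D) := by
    rw [hA, hB]
    simp only [D, add_mul, mul_add, one_mul, mul_one, smul_mul_assoc, mul_smul_comm, smul_add,
      smul_sub, smul_smul]
    module
  have hval : ((g * k * g⁻¹ * k⁻¹ : GL ι ℤ_[p]) : 𝕄) = 1 + (p : ℤ_[p]) ^ (a + 1) •
      ((X * Y - Y * X + (p : ℤ_[p]) • D) * (↑g⁻¹ : 𝕄) * (↑k⁻¹ : 𝕄)) := by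
    rw [← smul_mul_assoc, ← smul_mul_assoc, ← hcomm, sub_mul, sub_mul]
    have hkg : (k * g : 𝕄) * (↑g⁻¹ : 𝕄) * (↑k⁻¹ : 𝕄) = 1 := by
      simp only [mul_assoc, Units.mul_inv, one_mul]
    rw [hkg, Units.val_mul, Units.val_mul, Units.val_mul]
    abel
  rw [hval, map_add, map_add]
  refine congrArg _ (matrixToZModPow_pow_smul_eq ?_ (a + 1))
  rw [map_mul, map_mul, matrixToZModPow_one_inv_eq_one ha hgX,
    matrixToZModPow_one_inv_eq_one le_rfl hkY, mul_one, mul_one, map_add, ← pow_one (p : ℤ_[p]),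
    matrixToZModPow_pow_smul le_rfl, add_zero]

end congruenceLayer

theorem dvd_trace_of_det_one_add_pow_smul {n : ℕ} (hn : 1 ≤ n) {X : 𝕄}
    (h : (1 + (p : ℤ_[p]) ^ n • X).det = 1) : (p : ℤ_[p]) ∣ X.trace := by
  rw [det_one_add_smul, add_assoc, add_eq_left] at h
  obtain ⟨q, hq⟩ : ∃ q, X.trace * (p : ℤ_[p]) ^ n + q * ((p : ℤ_[p]) ^ n) ^ 2 = 0 := ⟨_, h⟩
  have hp : (p : ℤ_[p]) ^ n ≠ 0 := pow_ne_zero _ (Nat.cast_ne_zero.mpr (Fact.out : p.Prime).ne_zero)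
  have htr : X.trace = -(q * (p : ℤ_[p]) ^ n) := mul_right_cancel₀ hp (by linear_combination hq)
  rw [htr, ← Nat.sub_add_cancel hn, pow_succ]
  exact ((dvd_mul_left _ _).mul_left q).neg_right

theorem exists_mem_matrixToZModPow_eq {H : Subgroup (GL ι ℤ_[p])}
    (hdet : ∀ h ∈ H, (h : 𝕄).det = 1) (hsurj : MapsOntoSLModP H)
    (hlayer : ∀ n, 1 ≤ n → ∀ Z : 𝕄, (p : ℤ_[p]) ∣ Z.trace → Z ∈ congruenceLayer H n)
    (s : SpecialLinearGroup ι ℤ_[p]) (n : ℕ) :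
    ∃ h ∈ H, matrixToZModPow n (h : 𝕄) = matrixToZModPow n (s : 𝕄) := by
  induction n with
  | zero => exact ⟨1, H.one_mem, matrixToZModPow_eq_iff.mpr ⟨1 - s, by simp⟩⟩
  | succ n ih =>
    rcases Nat.eq_zero_or_pos n with rfl | hn
    · exact hsurj s
    obtain ⟨h, hh, hhs⟩ := ih
    obtain ⟨C, hC⟩ := matrixToZModPow_eq_iff.mp hhs.symm
    have hstep : (↑h⁻¹ : 𝕄) * s = 1 + (p : ℤ_[p]) ^ n • ((↑h⁻¹ : 𝕄) * C) := by
      rw [hC, mul_add, Units.inv_mul, mul_smul_comm]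
    have hdet_step : (1 + (p : ℤ_[p]) ^ n • ((↑h⁻¹ : 𝕄) * C)).det = 1 := by
      rw [← hstep, det_mul, hdet _ (H.inv_mem hh), s.2, one_mul]
    obtain ⟨h', hh', hh's⟩ := hlayer n hn _ (dvd_trace_of_det_one_add_pow_smul hn hdet_step)
    refine ⟨h * h', H.mul_mem hh hh', ?_⟩
    rw [Units.val_mul, map_mul, hh's, ← hstep, ← map_mul, ← mul_assoc, Units.mul_inv, one_mul]

end CongruenceLayer

section SL2

variable (R : Type*) [CommRing R]

def sl2E : Matrix (Fin 2) (Fin 2) R := !![0, 1; 0, 0]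

def sl2F : Matrix (Fin 2) (Fin 2) R := !![0, 0; 1, 0]

def sl2H : Matrix (Fin 2) (Fin 2) R := !![1, 0; 0, -1]

theorem sl2E_mul_self : sl2E R * sl2E R = 0 := by
  ext i j; fin_cases i <;> fin_cases j <;> simp [sl2E]

theorem sl2H_mul_sub_mul_sl2E : sl2H R * sl2E R - sl2E R * sl2H R = 2 • sl2E R := by
  ext i j; fin_cases i <;> fin_cases j <;> simp [sl2E, sl2H, two_smul]

theorem sl2H_mul_sub_mul_sl2F : sl2H R * sl2F R - sl2F R * sl2H R = -(2 • sl2F R) := by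
  ext i j; fin_cases i <;> fin_cases j <;> simp [sl2F, sl2H, two_smul, sub_eq_add_neg]

theorem sl2E_mul_sub_mul_sl2F : sl2E R * sl2F R - sl2F R * sl2E R = sl2H R := by
  ext i j; fin_cases i <;> fin_cases j <;> simp [sl2E, sl2F, sl2H]

variable {R}

theorem Matrix.eq_sl2_add_trace_smul (Z : Matrix (Fin 2) (Fin 2) R) :
    Z = Z 0 1 • sl2E R + Z 1 0 • sl2F R + Z 0 0 • sl2H R + Z.trace • !![0, 0; 0, 1] := by
  ext i j; fin_cases i <;> fin_cases j <;> simp [sl2E, sl2F, sl2H, trace_fin_two]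

end SL2

namespace congruenceLayer

variable {p : ℕ} [Fact p.Prime] {H : Subgroup (GL (Fin 2) ℤ_[p])}

local notation "𝕄₂" => Matrix (Fin 2) (Fin 2) ℤ_[p]

theorem mem_of_sl2_mem {n : ℕ} (hn : 1 ≤ n) (hE : sl2E ℤ_[p] ∈ congruenceLayer H n)
    (hF : sl2F ℤ_[p] ∈ congruenceLayer H n) (hH : sl2H ℤ_[p] ∈ congruenceLayer H n) {Z : 𝕄₂}
    (hZ : (p : ℤ_[p]) ∣ Z.trace) : Z ∈ congruenceLayer H n := by
  obtain ⟨d, hd⟩ := hZ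
  refine mem_of_mod_p_eq (Z := Z 0 1 • sl2E ℤ_[p] + Z 1 0 • sl2F ℤ_[p] + Z 0 0 • sl2H ℤ_[p])
    (add_mem hn (add_mem hn (smul_mem hn hE _) (smul_mem hn hF _)) (smul_mem hn hH _))
    (matrixToZModPow_eq_iff.mpr ⟨-(d • !![0, 0; 0, 1]), ?_⟩)
  conv_rhs => rw [Z.eq_sl2_add_trace_smul, hd]
  module

theorem sl2E_mem (hp5 : 5 ≤ p) (hsurj : MapsOntoSLModP H) : sl2E ℤ_[p] ∈ congruenceLayer H 1 := by
  obtain ⟨g, hg, hgu⟩ := hsurj ⟨!![1, 1; 0, 1], by simp [det_fin_two]⟩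
  obtain ⟨B, hB⟩ := matrixToZModPow_eq_iff.mp hgu
  refine ⟨g ^ p, H.pow_mem hg p, ?_⟩
  have hu : (!![1, 1; 0, 1] : 𝕄₂) = 1 + sl2E ℤ_[p] := by
    ext i j; fin_cases i <;> fin_cases j <;> simp [sl2E]
  have hp_smul (M : 𝕄₂) : (p : ℤ_[p]) ^ 1 • M = (p : 𝕄₂) * M := by
    rw [pow_one, Nat.cast_smul_eq_nsmul, nsmul_eq_mul]
  rw [Units.val_pow_eq_pow_val, map_pow, hB, hp_smul, hp_smul]
  simp only [map_add, map_mul, map_natCast, map_one]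
  rw [hu, map_add, map_one]
  exact one_add_add_mul_pow_prime (R := Matrix (Fin 2) (Fin 2) (ZMod (p ^ 2))) Fact.out hp5
    (by rw [← Nat.cast_pow, CharP.cast_eq_zero]) (by rw [← map_mul, sl2E_mul_self, map_zero]) _

theorem sl2F_mem (hp5 : 5 ≤ p) (hsurj : MapsOntoSLModP H) : sl2F ℤ_[p] ∈ congruenceLayer H 1 := by
  let w : SpecialLinearGroup (Fin 2) ℤ_[p] := ⟨!![0, -1; 1, 0], by simp [det_fin_two]⟩
  have hw : (w : 𝕄₂) * sl2E ℤ_[p] * adjugate (w : 𝕄₂) = -sl2F ℤ_[p] := by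
    ext i j; fin_cases i <;> fin_cases j <;> simp [w, sl2E, sl2F, adjugate_fin_two_of]
  have hconj := conj_mem_of_mapsOntoSLModP hsurj (sl2E_mem hp5 hsurj) w
  rw [hw] at hconj
  simpa using smul_mem le_rfl hconj (-1)

theorem sl2H_mem (hp5 : 5 ≤ p) (hsurj : MapsOntoSLModP H) : sl2H ℤ_[p] ∈ congruenceLayer H 1 := by
  let v : SpecialLinearGroup (Fin 2) ℤ_[p] := ⟨!![1, 0; 1, 1], by simp [det_fin_two]⟩
  have hv : (v : 𝕄₂) * sl2E ℤ_[p] * adjugate (v : 𝕄₂) = sl2E ℤ_[p] - sl2H ℤ_[p] - sl2F ℤ_[p] := by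
    ext i j; fin_cases i <;> fin_cases j <;> simp [v, sl2E, sl2F, sl2H, adjugate_fin_two_of]
  have hE := sl2E_mem hp5 hsurj
  have hconj := conj_mem_of_mapsOntoSLModP hsurj hE v
  rw [hv] at hconj
  have hsum := add_mem le_rfl (add_mem le_rfl hE (smul_mem le_rfl hconj (-1)))
    (smul_mem le_rfl (sl2F_mem hp5 hsurj) (-1))
  convert hsum using 1
  module

theorem sl2_mem (hp5 : 5 ≤ p) (hsurj : MapsOntoSLModP H) {n : ℕ} (hn : 1 ≤ n) :
    sl2E ℤ_[p] ∈ congruenceLayer H n ∧ sl2F ℤ_[p] ∈ congruenceLayer H n ∧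
      sl2H ℤ_[p] ∈ congruenceLayer H n := by
  induction n, hn using Nat.le_induction with
  | base => exact ⟨sl2E_mem hp5 hsurj, sl2F_mem hp5 hsurj, sl2H_mem hp5 hsurj⟩
  | succ n hn ih =>
    obtain ⟨hE, -, hH⟩ := ih
    have hp2 : p.Coprime 2 := (Nat.coprime_primes Fact.out Nat.prime_two).mpr (by omega)
    have hHE := commutator_mem hn hH (sl2E_mem hp5 hsurj)
    have hHF := smul_mem (by omega) (commutator_mem hn hH (sl2F_mem hp5 hsurj)) (-1)
    have hEF := commutator_mem hn hE (sl2F_mem hp5 hsurj)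
    rw [sl2H_mul_sub_mul_sl2E] at hHE
    rw [sl2H_mul_sub_mul_sl2F, neg_one_smul, neg_neg] at hHF
    rw [sl2E_mul_sub_mul_sl2F] at hEF
    exact ⟨mem_of_nsmul_mem (by omega) hp2 hHE, mem_of_nsmul_mem (by omega) hp2 hHF, hEF⟩

theorem mem_of_dvd_trace (hp5 : 5 ≤ p) (hsurj : MapsOntoSLModP H) {n : ℕ} (hn : 1 ≤ n) {Z : 𝕄₂}
    (hZ : (p : ℤ_[p]) ∣ Z.trace) : Z ∈ congruenceLayer H n :=
  let ⟨hE, hF, hH⟩ := sl2_mem hp5 hsurj hn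
  mem_of_sl2_mem hn hE hF hH hZ

end congruenceLayer

theorem glReduction_eq_iff {p : ℕ} [Fact p.Prime] {g h : GL (Fin 2) ℤ_[p]} :
    glReduction p g = glReduction p h ↔
      matrixToZModPow 1 (g : Matrix (Fin 2) (Fin 2) ℤ_[p]) =
        matrixToZModPow 1 (h : Matrix (Fin 2) (Fin 2) ℤ_[p]) := by
  rw [Units.ext_iff, ← Matrix.ext_iff, ← Matrix.ext_iff]
  simp only [glReduction, GeneralLinearGroup.map_apply, RingHom.mapMatrix_apply, map_apply,
    PadicInt.toZMod_eq_iff_dvd, PadicInt.toZModPow_eq_iff_dvd, pow_one]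

/-- For `ℓ ≥ 5`, a closed subgroup of `SL₂(ℤ_ℓ)` surjecting onto `SL₂(𝔽_ℓ)`
is all of `SL₂(ℤ_ℓ)`. -/
theorem stmt3 (p : ℕ) [Fact p.Prime] (hp : 5 ≤ p)
    (H : Subgroup (GL (Fin 2) ℤ_[p]))
    (hclosed : IsClosed (H : Set (GL (Fin 2) ℤ_[p])))
    (hdet : ∀ h ∈ H, Matrix.det (h : Matrix (Fin 2) (Fin 2) ℤ_[p]) = 1)
    (hsurj : ∀ A : GL (Fin 2) ℤ_[p], Matrix.det (A : Matrix (Fin 2) (Fin 2) ℤ_[p]) = 1 →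
      ∃ h ∈ H, glReduction p h = glReduction p A) :
    ∀ A : GL (Fin 2) ℤ_[p], Matrix.det (A : Matrix (Fin 2) (Fin 2) ℤ_[p]) = 1 → A ∈ H := by
  intro A hA
  have hsurj' : MapsOntoSLModP H := fun s =>
    let ⟨h, hh, hred⟩ := hsurj s s.2
    ⟨h, hh, glReduction_eq_iff.mp hred⟩
  exact H.mem_of_isClosed_of_forall_matrixToZModPow_eq hclosed
    (exists_mem_matrixToZModPow_eq hdet hsurj'
      (fun _ hn _ => congruenceLayer.mem_of_dvd_trace hp hsurj' hn) ⟨A, hA⟩)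
end

section
/- Let ℓ be an odd prime. The topological closure of the commutator subgroup of GL₂(ℤ_ℓ) equals SL₂(ℤ_ℓ), the subgroup of all elements of determinant 1. -/
open Matrix
open scoped commutatorElement

/-!
Over a local ring, a matrix in `SL₂` whose lower-left entry `c` is a unit factors as
`[[1, x], [0, 1]] * [[1, 0], [c, 1]] * [[1, y], [0, 1]]`; if `c` is not a unit, the upper-left
entry is, and one elementary row operation makes the lower-left entry a unit. So `SL₂` of a
local ring is generated by transvections. When `2` is invertible, each transvection `T` is a
commutator in `GL₂`, because conjugation by `diag(2, 1)` or `diag(1, 2)` sends `T` to `T²`.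
Hence the commutator subgroup of `GL₂(ℤ_ℓ)` is `SL₂(ℤ_ℓ)` itself, which is closed as the kernel
of the continuous determinant.
-/

namespace Matrix.SpecialLinearGroup

variable {R : Type*} [CommRing R]

theorem fin_two_exists_eq_transvection_mul_transvection_mul_transvection
    (A : SpecialLinearGroup (Fin 2) R) (hA : IsUnit (A 1 0)) :
    ∃ x y : R, A = transvection (zero_ne_one' (Fin 2)) x *
      transvection (zero_ne_one' (Fin 2)).symm (A 1 0) * transvection (zero_ne_one' (Fin 2)) y := by
  obtain ⟨u, hu⟩ := hA
  have hdet : A 0 0 * A 1 1 - A 0 1 * A 1 0 = 1 := by rw [← det_fin_two]; exact A.det_coe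
  refine ⟨(A 0 0 - 1) * ↑u⁻¹, (A 1 1 - 1) * ↑u⁻¹, ?_⟩
  ext i j
  rw [← hu] at hdet ⊢
  fin_cases i <;> fin_cases j <;>
    simp only [Fin.zero_eta, Fin.mk_one, Fin.isValue, coe_mul, transvection_coe, mul_apply,
      add_apply, single_apply, Fin.sum_univ_two, one_apply_eq, one_apply_ne,
      ne_eq, zero_ne_one, one_ne_zero, not_false_eq_true, ↓reduceIte, true_and, false_and,
      and_true, and_false, add_zero, zero_add, one_mul, mul_one, zero_mul, mul_zero,
      Units.inv_mul_cancel_right, add_sub_cancel]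
  · linear_combination (-↑u⁻¹ : R) * hdet - A 0 1 * u.mul_inv
  · exact hu.symm
  · linear_combination (1 - A 1 1) * u.mul_inv

theorem fin_two_isUnit_or_isUnit_add [IsLocalRing R] (A : SpecialLinearGroup (Fin 2) R) :
    IsUnit (A 1 0) ∨ IsUnit (A 0 0 + A 1 0) := by
  have hdet : A 0 0 * A 1 1 - A 0 1 * A 1 0 = 1 := by rw [← det_fin_two]; exact A.det_coe
  by_contra! h
  obtain ⟨hc, hac⟩ := h
  rw [← mem_nonunits_iff, ← IsLocalRing.mem_maximalIdeal] at hc hac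
  have ha : A 0 0 ∈ IsLocalRing.maximalIdeal R := by simpa using Ideal.sub_mem _ hac hc
  have : (1 : R) ∈ IsLocalRing.maximalIdeal R :=
    hdet ▸ Ideal.sub_mem _ (Ideal.mul_mem_right _ _ ha) (Ideal.mul_mem_left _ _ hc)
  exact (IsLocalRing.mem_maximalIdeal _).1 this isUnit_one

theorem fin_two_eq_top_of_forall_transvection_mem [IsLocalRing R]
    {H : Subgroup (SpecialLinearGroup (Fin 2) R)}
    (hH : ∀ {i j : Fin 2} (hij : i ≠ j) (c : R), transvection hij c ∈ H) : H = ⊤ := by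
  have mem_of_isUnit (A : SpecialLinearGroup (Fin 2) R) (hA : IsUnit (A 1 0)) : A ∈ H := by
    obtain ⟨x, y, hxy⟩ :=
      fin_two_exists_eq_transvection_mul_transvection_mul_transvection A hA
    exact hxy ▸ mul_mem (mul_mem (hH _ x) (hH _ _)) (hH _ y)
  refine eq_top_iff.2 fun A _ ↦ ?_
  rcases fin_two_isUnit_or_isUnit_add A with hA | hA
  · exact mem_of_isUnit A hA
  · have h10 : (1 : Fin 2) ≠ 0 := (zero_ne_one' (Fin 2)).symm
    have hTA : transvection h10 1 * A ∈ H := mem_of_isUnit _ <| by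
      simpa [transvection_coe, mul_apply, Fin.sum_univ_two, add_comm] using hA
    simpa [← mul_assoc, ← transvection_add] using mul_mem (hH h10 (-1)) hTA

end Matrix.SpecialLinearGroup

namespace Matrix.GeneralLinearGroup

variable {n R : Type*} [Fintype n] [DecidableEq n] [CommRing R]

def diagonal (d : n → Rˣ) : GL n R :=
  ⟨Matrix.diagonal fun k ↦ d k, Matrix.diagonal fun k ↦ ↑(d k)⁻¹,
    by simp [diagonal_mul_diagonal], by simp [diagonal_mul_diagonal]⟩

theorem diagonal_mul_transvection_mul_inv {i j : n} (hij : i ≠ j) (d : n → Rˣ) (c : R) :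
    diagonal d * (SpecialLinearGroup.transvection hij c : GL n R) * (diagonal d)⁻¹ =
      SpecialLinearGroup.transvection hij (d i * c * ↑(d j)⁻¹) := by
  rw [mul_inv_eq_iff_eq_mul]
  ext k l
  simp only [Units.val_mul, diagonal, SpecialLinearGroup.coe_GL_coe_matrix,
    SpecialLinearGroup.transvection_coe]
  simp only [diagonal_mul, mul_diagonal, add_apply, one_apply, single_apply, mul_add, add_mul,
    mul_ite, ite_mul, mul_one, one_mul, mul_zero, zero_mul]
  split_ifs <;> simp_all [mul_assoc]

theorem transvection_mem_commutator (h2 : IsUnit (2 : R)) {i j : n} (hij : i ≠ j) (c : R) :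
    (SpecialLinearGroup.transvection hij c : GL n R) ∈ commutator (GL n R) := by
  obtain ⟨u, hu⟩ := h2
  have hconj := diagonal_mul_transvection_mul_inv hij (Pi.mulSingle i u) c
  simp only [Pi.mulSingle_eq_same, Pi.mulSingle_eq_of_ne' hij, inv_one, Units.val_one, mul_one,
    hu] at hconj
  have : ⁅diagonal (Pi.mulSingle i u), (SpecialLinearGroup.transvection hij c : GL n R)⁆ =
      SpecialLinearGroup.transvection hij c := by
    rw [commutatorElement_def, hconj, ← map_inv, SpecialLinearGroup.transvection_inv, ← map_mul,
      ← SpecialLinearGroup.transvection_add, two_mul, add_neg_cancel_right]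
  rw [← this, commutator_def]
  exact Subgroup.commutator_mem_commutator (Subgroup.mem_top _) (Subgroup.mem_top _)

theorem commutator_eq_ker_det_of_isUnit_two [IsLocalRing R] (h2 : IsUnit (2 : R)) :
    commutator (GL (Fin 2) R) = (det : GL (Fin 2) R →* Rˣ).ker := by
  refine le_antisymm (Abelianization.commutator_subset_ker _) fun g hg ↦ ?_
  have hsl : (commutator (GL (Fin 2) R)).comap SpecialLinearGroup.toGL = ⊤ :=
    SpecialLinearGroup.fin_two_eq_top_of_forall_transvection_mem
      (transvection_mem_commutator h2)
  obtain ⟨A, rfl⟩ : g ∈ Set.range SpecialLinearGroup.toGL := by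
    rwa [SpecialLinearGroup.range_toGL, ← MonoidHom.coe_ker]
  exact Subgroup.mem_comap.1 (hsl ▸ Subgroup.mem_top A)

end Matrix.GeneralLinearGroup

theorem PadicInt.isUnit_natCast_iff {p : ℕ} [Fact p.Prime] {n : ℕ} :
    IsUnit (n : ℤ_[p]) ↔ p.Coprime n :=
  isUnit_iff.trans norm_natCast_eq_one_iff

/-- For an odd prime `ℓ`, the topological closure of the commutator subgroup of
`GL₂(ℤ_ℓ)` is `SL₂(ℤ_ℓ)`, the subgroup of elements of determinant `1`. -/
theorem stmt4 (p : ℕ) [Fact p.Prime] (hodd : Odd p) :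
    (commutator (GL (Fin 2) ℤ_[p])).topologicalClosure =
      (Matrix.GeneralLinearGroup.det :
        GL (Fin 2) ℤ_[p] →* ℤ_[p]ˣ).ker := by
  have h2 : IsUnit (2 : ℤ_[p]) := by
    exact_mod_cast PadicInt.isUnit_natCast_iff.2 (Nat.coprime_two_right.2 hodd)
  have hclosed : IsClosed
      ((GeneralLinearGroup.det : GL (Fin 2) ℤ_[p] →* ℤ_[p]ˣ).ker : Set (GL (Fin 2) ℤ_[p])) := by
    rw [MonoidHom.coe_ker]
    exact isClosed_singleton.preimage GeneralLinearGroup.continuous_det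
  rw [GeneralLinearGroup.commutator_eq_ker_det_of_isUnit_two h2]
  exact SetLike.coe_injective hclosed.closure_eq
end

section
/- Let H be a subgroup of GL₂(ℤ/8ℤ). Suppose that: (a) the image of H under the reduction map GL₂(ℤ/8ℤ) → GL₂(ℤ/4ℤ) contains every matrix in GL₂(ℤ/4ℤ) congruent to the identity mod 2; and (b) H contains an element g with g ≡ I (mod 4) and det g = 5 in ℤ/8ℤ. Then H contains every matrix in GL₂(ℤ/8ℤ) congruent to the identity mod 2. -/
/-!
The kernel of reduction mod 4 consists of the matrices `1 + 4M`, and `M ↦ 1 + 4M` turns addition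
into multiplication (since `16 = 0` in `ℤ/8ℤ`), so the matrices `M` with `1 + 4M ∈ H` form a
`ℤ/8ℤ`-submodule. Elements `y ≡ 1 (mod 2)` commute with the kernel, hence `y²` only depends on
`y mod 4`, and by (a) the square of every such `y` lies in `H`. The squares of three explicit
lifts give `E₀₁`, `E₁₀` and `1` in that submodule, and the element `g` of (b) gives a matrix
whose diagonal entries differ by a unit, because `det (1 + 4M) = 1 + 4 tr M`. These span all
`2 × 2` matrices, so `H` contains the kernel of reduction mod 4, and then by (a) everything
congruent to `1` mod 2.
-/

open Matrix

/-- Reduction `GL₂(ℤ/8ℤ) →* GL₂(ℤ/4ℤ)`. -/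
def red84 : GL (Fin 2) (ZMod 8) →* GL (Fin 2) (ZMod 4) :=
  Matrix.GeneralLinearGroup.map (ZMod.castHom (by norm_num : (4 : ℕ) ∣ 8) (ZMod 4))

/-- Reduction `GL₂(ℤ/8ℤ) →* GL₂(ℤ/2ℤ)`. -/
def red82 : GL (Fin 2) (ZMod 8) →* GL (Fin 2) (ZMod 2) :=
  Matrix.GeneralLinearGroup.map (ZMod.castHom (by norm_num : (2 : ℕ) ∣ 8) (ZMod 2))

/-- Reduction `GL₂(ℤ/4ℤ) →* GL₂(ℤ/2ℤ)`. -/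
def red42 : GL (Fin 2) (ZMod 4) →* GL (Fin 2) (ZMod 2) :=
  Matrix.GeneralLinearGroup.map (ZMod.castHom (by norm_num : (2 : ℕ) ∣ 4) (ZMod 2))

theorem Matrix.submodule_eq_top_of_isUnit_sub_diag {R : Type*} [CommRing R]
    (p : Submodule R (Matrix (Fin 2) (Fin 2) R)) (h01 : single 0 1 1 ∈ p)
    (h10 : single 1 0 1 ∈ p) (h1 : 1 ∈ p) {M : Matrix (Fin 2) (Fin 2) R} (hM : M ∈ p)
    (hu : IsUnit (M 1 1 - M 0 0)) : p = ⊤ := by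
  have h11 : single 1 1 1 ∈ p := by
    have hdecomp : hu.unit • single 1 1 (1 : R) =
        M - M 0 1 • single 0 1 1 - M 1 0 • single 1 0 1 - M 0 0 • 1 := by
      ext i j; fin_cases i <;> fin_cases j <;> simp
    rw [← p.smul_mem_iff' hu.unit, hdecomp]
    exact sub_mem (sub_mem (sub_mem hM (p.smul_mem _ h01)) (p.smul_mem _ h10)) (p.smul_mem _ h1)
  have h00 : single 0 0 1 ∈ p := by
    have h00_eq : (single 0 0 1 : Matrix (Fin 2) (Fin 2) R) = 1 - single 1 1 1 := by
      ext i j; fin_cases i <;> fin_cases j <;> simp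
    exact h00_eq ▸ sub_mem h1 h11
  have hsingle : ∀ i j, single i j (1 : R) ∈ p := by
    intro i j; fin_cases i <;> fin_cases j <;> assumption
  refine eq_top_iff.2 fun N _ => ?_
  rw [matrix_eq_sum_single N]
  refine sum_mem fun i _ => sum_mem fun j _ => ?_
  simpa [smul_single] using p.smul_mem (N i j) (hsingle i j)

theorem ZMod.exists_eq_mul_of_mem_ker_castHom {m N : ℕ} [NeZero N] (h : m ∣ N) {z : ZMod N}
    (hz : z ∈ RingHom.ker (ZMod.castHom h (ZMod m))) : ∃ k : ZMod N, z = m * k := by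
  obtain ⟨k, hk⟩ : m ∣ z.val := by
    rwa [RingHom.mem_ker, ZMod.castHom_apply, ← ZMod.natCast_val, ZMod.natCast_eq_zero_iff] at hz
  exact ⟨k, by rw [← ZMod.natCast_zmod_val z, hk, Nat.cast_mul]⟩

namespace Matrix.GeneralLinearGroup

variable {n : Type*} [Fintype n] [DecidableEq n]

theorem apply_sub_one_mem_ker {R S : Type*} [CommRing R] [CommRing S] {f : R →+* S}
    {x : GL n R} (hx : map f x = 1) (i j : n) : x i j - (1 : Matrix n n R) i j ∈ RingHom.ker f := by
  have hij := congr_arg (fun g : GL n S => (g : Matrix n n S) i j) hx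
  simp only [Matrix.GeneralLinearGroup.map_apply, Units.val_one] at hij
  simp only [RingHom.mem_ker, map_sub, hij, one_apply]
  split_ifs <;> simp

theorem exists_eq_one_add_smul_of_map_eq_one {m N : ℕ} [NeZero N] (h : m ∣ N) {x : GL n (ZMod N)}
    (hx : map (ZMod.castHom h (ZMod m)) x = 1) :
    ∃ M : Matrix n n (ZMod N), (x : Matrix n n (ZMod N)) = 1 + (m : ZMod N) • M := by
  choose M hM using fun i j =>
    ZMod.exists_eq_mul_of_mem_ker_castHom h (apply_sub_one_mem_ker hx i j)
  refine ⟨of M, Matrix.ext fun i j => ?_⟩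
  rw [add_apply, smul_apply, of_apply, smul_eq_mul, ← hM, add_sub_cancel]

end Matrix.GeneralLinearGroup

section OneAddFour

variable {n : Type*} [Fintype n] [DecidableEq n]

theorem one_add_four_smul_mul (M N : Matrix n n (ZMod 8)) :
    (1 + (4 : ZMod 8) • M) * (1 + (4 : ZMod 8) • N) = 1 + (4 : ZMod 8) • (M + N) := by
  have h16 : ((4 : ZMod 8) • M) * ((4 : ZMod 8) • N) = 0 := by
    rw [smul_mul_smul_comm, show (4 : ZMod 8) * 4 = 0 by decide, zero_smul]
  rw [mul_add, add_mul, add_mul, h16, smul_add]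
  simp only [one_mul, mul_one, add_zero]
  abel

theorem one_add_four_smul_mul_self (M : Matrix n n (ZMod 8)) :
    (1 + (4 : ZMod 8) • M) * (1 + (4 : ZMod 8) • M) = 1 := by
  rw [one_add_four_smul_mul, ← two_smul (ZMod 8), smul_smul, show (4 : ZMod 8) * 2 = 0 by decide,
    zero_smul, add_zero]

def oneAddFour (M : Matrix n n (ZMod 8)) : GL n (ZMod 8) :=
  ⟨1 + (4 : ZMod 8) • M, 1 + (4 : ZMod 8) • M, one_add_four_smul_mul_self M,
    one_add_four_smul_mul_self M⟩

theorem oneAddFour_add (M N : Matrix n n (ZMod 8)) :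
    oneAddFour (M + N) = oneAddFour M * oneAddFour N :=
  Units.ext (one_add_four_smul_mul M N).symm

theorem oneAddFour_mul_self (M : Matrix n n (ZMod 8)) : oneAddFour M * oneAddFour M = 1 :=
  Units.ext (one_add_four_smul_mul_self M)

theorem oneAddFour_zero : oneAddFour (0 : Matrix n n (ZMod 8)) = 1 :=
  Units.ext (by simp [oneAddFour])

theorem commute_oneAddFour {y : GL n (ZMod 8)} {D : Matrix n n (ZMod 8)}
    (hy : (y : Matrix n n (ZMod 8)) = 1 + (2 : ZMod 8) • D) (M : Matrix n n (ZMod 8)) :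
    Commute y (oneAddFour M) := by
  have h24 : ∀ A B : Matrix n n (ZMod 8), ((2 : ZMod 8) • A) * ((4 : ZMod 8) • B) = 0 :=
    fun A B => by rw [smul_mul_smul_comm, show (2 : ZMod 8) * 4 = 0 by decide, zero_smul]
  have h42 : ∀ A B : Matrix n n (ZMod 8), ((4 : ZMod 8) • A) * ((2 : ZMod 8) • B) = 0 :=
    fun A B => by rw [smul_mul_smul_comm, show (4 : ZMod 8) * 2 = 0 by decide, zero_smul]
  refine Units.ext ?_
  change (y : Matrix n n (ZMod 8)) * (1 + (4 : ZMod 8) • M) = (1 + (4 : ZMod 8) • M) * y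
  rw [hy, mul_add, add_mul, add_mul, h24, add_mul, mul_add, mul_add, h42]
  simp only [one_mul, mul_one, add_zero]

def oneAddFourPreimage (H : Subgroup (GL n (ZMod 8))) :
    Submodule (ZMod 8) (Matrix n n (ZMod 8)) :=
  AddSubgroup.toZModSubmodule 8
    { carrier := {M | oneAddFour M ∈ H}
      add_mem' := fun {M N} hM hN => by
        change oneAddFour (M + N) ∈ H
        exact oneAddFour_add M N ▸ H.mul_mem hM hN
      zero_mem' := by
        change oneAddFour (0 : Matrix n n (ZMod 8)) ∈ H
        rw [oneAddFour_zero]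
        exact H.one_mem
      neg_mem' := fun {M} hM => by
        have hneg : oneAddFour (-M) = (oneAddFour M)⁻¹ :=
          eq_inv_of_mul_eq_one_left (by rw [← oneAddFour_add, neg_add_cancel, oneAddFour_zero])
        change oneAddFour (-M) ∈ H
        rw [hneg]
        exact H.inv_mem hM }

end OneAddFour

theorem det_oneAddFour (M : Matrix (Fin 2) (Fin 2) (ZMod 8)) :
    det (oneAddFour M : Matrix (Fin 2) (Fin 2) (ZMod 8)) = 1 + 4 * trace M := by
  have h16 : (16 : ZMod 8) = 0 := by decide
  change det (1 + (4 : ZMod 8) • M) = _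
  rw [det_fin_two, trace_fin_two]
  simp only [Fin.isValue, Matrix.add_apply, one_apply, ↓reduceIte, Matrix.smul_apply, smul_eq_mul,
    zero_ne_one, zero_add, one_ne_zero]
  linear_combination (M 0 0 * M 1 1 - M 0 1 * M 1 0) * h16

theorem exists_oneAddFour_eq {x : GL (Fin 2) (ZMod 8)} (hx : red84 x = 1) :
    ∃ M, oneAddFour M = x := by
  obtain ⟨M, hM⟩ := GeneralLinearGroup.exists_eq_one_add_smul_of_map_eq_one _ hx
  exact ⟨M, Units.ext hM.symm⟩

theorem mul_self_eq_mul_self_of_red84_eq {x y : GL (Fin 2) (ZMod 8)} (hxy : red84 x = red84 y)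
    (hy : red82 y = 1) : x * x = y * y := by
  obtain ⟨M, hM⟩ := exists_oneAddFour_eq (x := y⁻¹ * x)
    (by rw [map_mul, map_inv, hxy, inv_mul_cancel])
  obtain ⟨D, hD⟩ := GeneralLinearGroup.exists_eq_one_add_smul_of_map_eq_one _ hy
  rw [← mul_inv_cancel_left y x, ← hM, (commute_oneAddFour hD M).symm.mul_mul_mul_comm,
    oneAddFour_mul_self, mul_one]

theorem red42_red84 (x : GL (Fin 2) (ZMod 8)) : red42 (red84 x) = red82 x := by
  rw [red42, red84, red82, ← MonoidHom.comp_apply, ← GeneralLinearGroup.map_comp]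
  congr 2
  exact Subsingleton.elim _ _

section

variable {H : Subgroup (GL (Fin 2) (ZMod 8))}

theorem exists_mem_red84_eq (ha : ∀ B : GL (Fin 2) (ZMod 4), red42 B = 1 → B ∈ H.map red84)
    {A : GL (Fin 2) (ZMod 8)} (hA : red82 A = 1) : ∃ h ∈ H, red84 h = red84 A :=
  Subgroup.mem_map.1 (ha _ ((red42_red84 A).trans hA))

theorem mul_self_mem (ha : ∀ B : GL (Fin 2) (ZMod 4), red42 B = 1 → B ∈ H.map red84)
    {u : GL (Fin 2) (ZMod 8)} (hu : red82 u = 1) : u * u ∈ H := by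
  obtain ⟨h, hH, hh⟩ := exists_mem_red84_eq ha hu
  rw [← mul_self_eq_mul_self_of_red84_eq hh hu]
  exact H.mul_mem hH hH

theorem mem_of_red84_eq_one (ha : ∀ B : GL (Fin 2) (ZMod 4), red42 B = 1 → B ∈ H.map red84)
    (hb : ∃ g ∈ H, red84 g = 1 ∧ det (g : Matrix (Fin 2) (Fin 2) (ZMod 8)) = 5)
    {x : GL (Fin 2) (ZMod 8)} (hx : red84 x = 1) : x ∈ H := by
  obtain ⟨g, hgH, hg, hdet⟩ := hb
  obtain ⟨Mg, rfl⟩ := exists_oneAddFour_eq hg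
  obtain ⟨M, rfl⟩ := exists_oneAddFour_eq hx
  have hu : IsUnit (Mg 1 1 - Mg 0 0) := by
    rw [det_oneAddFour, trace_fin_two] at hdet
    -- the trace is odd, hence so is the difference of the diagonal entries; odd squares are 1 mod 8
    have odd_sq : ∀ a d : ZMod 8, 1 + 4 * (a + d) = 5 → (d - a) * (d - a) = 1 := by decide
    exact IsUnit.of_mul_eq_one _ (odd_sq _ _ hdet)
  have square_mem : ∀ (u : GL (Fin 2) (ZMod 8)) (N : Matrix (Fin 2) (Fin 2) (ZMod 8)),
      red82 u = 1 → u * u = oneAddFour N → N ∈ oneAddFourPreimage H := fun u N hu huN => by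
    change oneAddFour N ∈ H
    exact huN ▸ mul_self_mem ha hu
  have htop := submodule_eq_top_of_isUnit_sub_diag (oneAddFourPreimage H)
    (square_mem ⟨!![1, 2; 0, 1], !![1, 6; 0, 1], by decide, by decide⟩ _
      (Units.ext (by decide)) (Units.ext (by decide)))
    (square_mem ⟨!![1, 0; 2, 1], !![1, 0; 6, 1], by decide, by decide⟩ _
      (Units.ext (by decide)) (Units.ext (by decide)))
    (square_mem ⟨!![1, 2; 2, 3], !![5, 2; 2, 7], by decide, by decide⟩ _
      (Units.ext (by decide)) (Units.ext (by decide)))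
    hgH hu
  exact (htop ▸ Submodule.mem_top : M ∈ oneAddFourPreimage H)

end

/-- If a subgroup `H ≤ GL₂(ℤ/8ℤ)` reduces mod 4 onto everything congruent to the
identity mod 2, and contains an element `g ≡ I (mod 4)` with `det g = 5`, then `H`
contains every matrix congruent to the identity mod 2. -/
theorem stmt7 (H : Subgroup (GL (Fin 2) (ZMod 8)))
    (ha : ∀ B : GL (Fin 2) (ZMod 4), red42 B = 1 → B ∈ H.map red84)
    (hb : ∃ g ∈ H, red84 g = 1 ∧ Matrix.det (g : Matrix (Fin 2) (Fin 2) (ZMod 8)) = 5) :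
    ∀ A : GL (Fin 2) (ZMod 8), red82 A = 1 → A ∈ H := by
  intro A hA
  obtain ⟨h, hH, hh⟩ := exists_mem_red84_eq ha hA
  have hker : red84 (h⁻¹ * A) = 1 := by rw [map_mul, map_inv, hh, inv_mul_cancel]
  simpa using H.mul_mem hH (mem_of_red84_eq_one ha hb hker)
end

section
/- Let k be a field, G a group, and V a module over the group algebra k[G] which is 2-dimensional as a k-vector space. Let W and W' be k[G]-submodules of V each of which is 1-dimensional as a k-vector space. Then the k[G]-modules W ⊕ (V/W) and W' ⊕ (V/W') are isomorphic. -/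
/-!
If `W ≠ W'`, then `W` and `W'` are distinct lines in the 2-dimensional `k`-space `V`, hence
complementary as `k`-subspaces, and therefore also as `k[G]`-submodules. Then `V/W ≅ W'` and `V/W' ≅ W`, so both sides are isomorphic to `W × W'`.
-/

namespace Submodule

theorem isCompl_of_finrank_eq_one_of_ne {K V : Type*} [Field K] [AddCommGroup V] [Module K V]
    (hV : Module.finrank K V = 2) {s t : Submodule K V}
    (hs : Module.finrank K s = 1) (ht : Module.finrank K t = 1) (hst : s ≠ t) :
    IsCompl s t := by
  have : FiniteDimensional K V := .of_finrank_eq_succ hV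
  refine (isCompl_iff_disjoint s t (by omega)).mpr ?_
  exact (isAtom_iff_finrank_eq_one.mpr hs).disjoint_of_ne (isAtom_iff_finrank_eq_one.mpr ht) hst

theorem isCompl_of_finrank_restrictScalars_eq_one_of_ne {k A V : Type*} [Field k] [Ring A]
    [AddCommGroup V] [Module A V] [Module k V] [SMul k A] [IsScalarTower k A V]
    (hV : Module.finrank k V = 2) {W W' : Submodule A V}
    (hW : Module.finrank k W = 1) (hW' : Module.finrank k W' = 1) (hne : W ≠ W') :
    IsCompl W W' :=
  (isCompl_restrictScalars_iff k).mp <| isCompl_of_finrank_eq_one_of_ne (s := W.restrictScalars k)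
    (t := W'.restrictScalars k) hV hW hW' ((restrictScalars_injective k A V).ne hne)

noncomputable def prodQuotientEquivOfIsCompl {R M : Type*} [Ring R] [AddCommGroup M]
    [Module R M] {p q : Submodule R M} (h : IsCompl p q) :
    (p × (M ⧸ p)) ≃ₗ[R] (q × (M ⧸ q)) :=
  (LinearEquiv.refl R p).prodCongr (quotientEquivOfIsCompl p q h) ≪≫ₗ
    LinearEquiv.prodComm R p q ≪≫ₗ
    (LinearEquiv.refl R q).prodCongr (quotientEquivOfIsCompl q p h.symm).symm

end Submodule

/-- If `V` is a `k[G]`-module that is 2-dimensional over the field `k`, and `W`, `W'`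
are 1-dimensional `k[G]`-submodules, then `W ⊕ V/W ≅ W' ⊕ V/W'` as `k[G]`-modules. -/
theorem stmt8 (k : Type*) [Field k] (G : Type*) [Group G]
    (V : Type*) [AddCommGroup V] [Module (MonoidAlgebra k G) V]
    [Module k V] [IsScalarTower k (MonoidAlgebra k G) V]
    (hV : Module.finrank k V = 2)
    (W W' : Submodule (MonoidAlgebra k G) V)
    (hW : Module.finrank k W = 1) (hW' : Module.finrank k W' = 1) :
    Nonempty ((W × (V ⧸ W)) ≃ₗ[MonoidAlgebra k G] (W' × (V ⧸ W'))) := by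
  rcases eq_or_ne W W' with rfl | hne
  · exact ⟨LinearEquiv.refl _ _⟩
  · exact ⟨Submodule.prodQuotientEquivOfIsCompl
      (Submodule.isCompl_of_finrank_restrictScalars_eq_one_of_ne hV hW hW' hne)⟩
end

section
/- Let K be a number field, realized as a subfield of the complex numbers, such that for every integer n ≥ 1 the intersection K ∩ ℚ(μ_n) equals ℚ, where ℚ(μ_n) is the n-th cyclotomic field. Let d ∈ K, and suppose that for some n ≥ 1 there exists x ∈ K(μ_n) (the compositum of K and ℚ(μ_n)) with x² = d. Then there exist an integer m and an element s ∈ K such that d = m·s². -/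
/-!
Let `E = K(μ_n)`, which is Galois over `K`, and let `x ∈ E` with `x² = d ∈ K`; every
`σ ∈ Gal(E/K)` sends `x` to `±x`. Restricted to the ring `ℤ[μ_n]`, which generates `E` over `K`,
the automorphisms are still distinct characters, so by Dedekind's independence theorem there is
`a ∈ ℤ[μ_n]` with `Tr_{E/K}(x a) = ∑ σ(x) σ(a) ≠ 0`. Then `y = Tr(x a) / x = ∑ ±σ(a)` is a nonzero
element of `ℚ(μ_n)` with `x y ∈ K`, so `y² = (x y)² / d ∈ K ∩ ℚ(μ_n) = ℚ`, and
`d = (x y)² / y²` is a rational multiple of a square in `K`.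
-/

open IntermediateField

/-- The `n`-th cyclotomic field `ℚ(μ_n)` inside `ℂ`. -/
noncomputable def cycField (n : ℕ) : IntermediateField ℚ ℂ :=
  IntermediateField.adjoin ℚ {x : ℂ | x ^ n = 1}

section KummerPartner

variable {K E : Type*} [Field K] [Field E] [Algebra K E]

theorem exists_mem_sum_mul_algEquiv_apply_ne_zero [Fintype Gal(E/K)] (F : Subring E)
    (hF : Algebra.adjoin K (F : Set E) = ⊤) {c : Gal(E/K) → E} (hc : c ≠ 0) :
    ∃ a ∈ F, ∑ σ, c σ * σ a ≠ 0 := by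
  let restrict (σ : Gal(E/K)) : F →* E := (σ : E →* E).comp F.subtype
  have hrestrict : Function.Injective restrict := fun σ τ h ↦
    AlgEquiv.coe_toAlgHom_injective <| AlgHom.ext_of_adjoin_eq_top hF fun a ha ↦
      DFunLike.congr_fun h ⟨a, ha⟩
  by_contra! hzero
  refine hc <| funext <| Fintype.linearIndependent_iff.mp
    ((linearIndependent_monoidHom F E).comp restrict hrestrict) c <| funext fun a ↦ ?_
  simpa [restrict] using hzero a a.2

theorem AlgEquiv.apply_eq_or_eq_neg_of_sq_mem_bot (σ : Gal(E/K)) {x : E}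
    (hx : x ^ 2 ∈ (⊥ : IntermediateField K E)) : σ x = x ∨ σ x = -x := by
  obtain ⟨k, hk⟩ := IntermediateField.mem_bot.mp hx
  refine mul_self_eq_mul_self_iff.mp ?_
  rw [← map_mul, ← sq, ← hk, AlgEquiv.commutes]

theorem IsGalois.exists_mem_ne_zero_sq_mem_bot_mul_mem_bot [FiniteDimensional K E]
    [IsGalois K E] (F : Subring E) (hgen : Algebra.adjoin K (F : Set E) = ⊤)
    (hstable : ∀ σ : Gal(E/K), ∀ a ∈ F, σ a ∈ F) {x : E}
    (hx : x ^ 2 ∈ (⊥ : IntermediateField K E)) :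
    ∃ y ∈ F, y ≠ 0 ∧ y ^ 2 ∈ (⊥ : IntermediateField K E) ∧ x * y ∈ (⊥ : IntermediateField K E) := by
  rcases eq_or_ne x 0 with rfl | hx0
  · exact ⟨1, F.one_mem, one_ne_zero, by simp, by simp⟩
  obtain ⟨a, haF, ha⟩ := exists_mem_sum_mul_algEquiv_apply_ne_zero F hgen
    (c := fun σ ↦ σ x) (Function.ne_iff.mpr ⟨1, hx0⟩)
  -- `x * y = Tr(x a)` lies in `K`, while `y = ∑ (σ x / x) * σ a` with `σ x / x = ±1` lies in `F`.
  set y := x⁻¹ * ∑ σ : Gal(E/K), σ x * σ a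
  have hxy : x * y ∈ (⊥ : IntermediateField K E) := by
    simp_rw [y, mul_inv_cancel_left₀ hx0, ← map_mul, ← trace_eq_sum_automorphisms]
    exact IntermediateField.algebraMap_mem _ _
  refine ⟨y, ?_, mul_ne_zero (inv_ne_zero hx0) ha, ?_, hxy⟩
  · simp only [y, Finset.mul_sum]
    refine F.sum_mem fun σ _ ↦ ?_
    rw [← mul_assoc]
    refine F.mul_mem ?_ (hstable σ a haF)
    rcases σ.apply_eq_or_eq_neg_of_sq_mem_bot hx with h | h <;> rw [h]
    · simp [hx0, F.one_mem]
    · simp [hx0, F.one_mem, F.neg_mem]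
  · have hy2 : y ^ 2 = (x * y) ^ 2 / x ^ 2 := by field_simp
    rw [hy2]
    exact div_mem (pow_mem hxy 2) hx

theorem IsCyclotomicExtension.exists_mem_closure_ne_zero_sq_mem_bot_mul_mem_bot (n : ℕ)
    [IsCyclotomicExtension {n} K E] {x : E} (hx : x ^ 2 ∈ (⊥ : IntermediateField K E)) :
    ∃ y ∈ Subring.closure {b : E | b ^ n = 1}, y ≠ 0 ∧ y ^ 2 ∈ (⊥ : IntermediateField K E) ∧
      x * y ∈ (⊥ : IntermediateField K E) := by
  have := IsCyclotomicExtension.isGalois {n} K E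
  have := IsCyclotomicExtension.finiteDimensional {n} K E
  refine IsGalois.exists_mem_ne_zero_sq_mem_bot_mul_mem_bot _ ?_ (fun σ a ha ↦ ?_) hx
  · refine top_le_iff.mp <| ((IsCyclotomicExtension.iff_adjoin_eq_top {n} K E).mp ‹_›).2.ge.trans
      (Algebra.adjoin_mono ?_)
    rintro b ⟨_, rfl, -, hb⟩
    exact Subring.subset_closure hb
  · refine (Subring.closure_le (t := (Subring.closure _).comap (σ : E →+* E))).mpr
      (fun b hb ↦ Subring.subset_closure ?_) ha
    simp_all [← map_pow]

end KummerPartner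

theorem IsPrimitiveRoot.isCyclotomicExtension_adjoin_pow_eq_one (K : Type*) {L : Type*}
    [Field K] [Field L] [Algebra K L] {n : ℕ} [NeZero n] {ζ : L} (hζ : IsPrimitiveRoot ζ n) :
    IsCyclotomicExtension {n} K (IntermediateField.adjoin K {b : L | b ^ n = 1}) := by
  have hroots : {b : L | b ^ n = 1} = {b : L | ∃ m ∈ ({n} : Set ℕ), m ≠ 0 ∧ b ^ m = 1} := by
    simp [NeZero.ne n]
  rw [hroots]
  exact IntermediateField.isCyclotomicExtension_adjoin_of_exists_isPrimitiveRoot {n} K L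
    (by rintro _ rfl -; exact ⟨ζ, hζ⟩)

theorem sq_eq_intCast_mul_sq_of_sq_eq_ratCast {L : Type*} [Field L] [CharZero L] (x : L)
    {y : L} {q : ℚ} (hy : y ^ 2 = q) (hy0 : y ≠ 0) :
    x ^ 2 = ((q.num * q.den : ℤ) : L) * (x * y / q.num) ^ 2 := by
  have hq : q ≠ 0 := by rintro rfl; simp_all
  have hnum : (q.num : L) ≠ 0 := by exact_mod_cast Rat.num_ne_zero.mpr hq
  rw [div_pow, mul_pow, hy, Rat.cast_def]
  field_simp
  push_cast
  ring

theorem IntermediateField.mem_bot_iff_coe_mem {F L : Type*} [Field F] [Field L] [Algebra F L]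
    {K : IntermediateField F L} {E : IntermediateField K L} {e : E} :
    e ∈ (⊥ : IntermediateField K E) ↔ (e : L) ∈ K :=
  ⟨fun ⟨k, hk⟩ ↦ hk ▸ k.2, fun he ↦ ⟨⟨e, he⟩, rfl⟩⟩

theorem coe_mem_cycField_of_mem_closure {K : IntermediateField ℚ ℂ} {n : ℕ}
    {e : adjoin K {z : ℂ | z ^ n = 1}} (he : e ∈ Subring.closure {b | b ^ n = 1}) :
    (e : ℂ) ∈ cycField n := by
  refine (Subring.closure_le (t := (cycField n).toSubring.comap
    (adjoin K {z : ℂ | z ^ n = 1}).val.toRingHom)).mpr (fun b hb ↦ ?_) he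
  exact subset_adjoin ℚ _ (by simpa using congrArg Subtype.val hb)

theorem stmt9_general (K : IntermediateField ℚ ℂ)
    (hK : ∀ n : ℕ, 1 ≤ n → K ⊓ cycField n = ⊥)
    (d : ℂ) (hd : d ∈ K)
    (hsq : ∃ n : ℕ, 1 ≤ n ∧ ∃ x ∈ K ⊔ cycField n, x ^ 2 = d) :
    ∃ (m : ℤ) (s : ℂ), s ∈ K ∧ d = (m : ℂ) * s ^ 2 := by
  obtain ⟨n, hn, x, hx, rfl⟩ := hsq
  have : NeZero n := ⟨by omega⟩
  have := (Complex.isPrimitiveRoot_exp n (NeZero.ne n)).isCyclotomicExtension_adjoin_pow_eq_one K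
  rw [cycField, ← restrictScalars_adjoin_eq_sup] at hx
  obtain ⟨y, hyR, hy0, hy2, hxy⟩ :=
    IsCyclotomicExtension.exists_mem_closure_ne_zero_sq_mem_bot_mul_mem_bot n
      (x := ⟨x, hx⟩) (mem_bot_iff_coe_mem.mpr hd)
  rw [mem_bot_iff_coe_mem] at hy2 hxy
  have hy2_rat : (y : ℂ) ^ 2 ∈ (⊥ : IntermediateField ℚ ℂ) :=
    hK n hn ▸ ⟨hy2, pow_mem (coe_mem_cycField_of_mem_closure hyR) 2⟩
  obtain ⟨q, hq⟩ := mem_bot.mp hy2_rat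
  exact ⟨q.num * q.den, x * y / q.num, div_mem hxy (intCast_mem K _),
    sq_eq_intCast_mul_sq_of_sq_eq_ratCast x hq.symm (by simpa using hy0)⟩

/-- If `K` is a number field inside `ℂ` with `K ∩ ℚ(μ_n) = ℚ` for all `n ≥ 1`,
`d ∈ K`, and `d` has a square root in some `K(μ_n)`, then `d = m·s²` for some
integer `m` and some `s ∈ K`. -/
theorem stmt9 (K : IntermediateField ℚ ℂ) [FiniteDimensional ℚ K]
    (hK : ∀ n : ℕ, 1 ≤ n → K ⊓ cycField n = ⊥)
    (d : ℂ) (hd : d ∈ K)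
    (hsq : ∃ n : ℕ, 1 ≤ n ∧ ∃ x ∈ K ⊔ cycField n, x ^ 2 = d) :
    ∃ (m : ℤ) (s : ℂ), s ∈ K ∧ d = (m : ℂ) * s ^ 2 :=
  stmt9_general K hK d hd hsq
end

section
/- Let ℓ be a prime and let A be a 2×2 matrix over ℤ_ℓ whose characteristic polynomial, reduced mod ℓ, has two distinct roots in 𝔽_ℓ = ℤ/ℓℤ. Then A is diagonalizable over ℤ_ℓ: there exist P ∈ GL₂(ℤ_ℓ) and λ₁, λ₂ ∈ ℤ_ℓ such that P·A·P⁻¹ is the diagonal matrix with diagonal entries λ₁ and λ₂. -/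
/-!
`ℤ_ℓ` is a Henselian local ring, so the two simple roots `r₁ ≠ r₂` of the characteristic
polynomial mod `ℓ` lift to roots `λ₁, λ₂ ∈ ℤ_ℓ` whose difference is a unit. By Cayley–Hamilton
the columns of `A - λ₂` are `λ₁`-eigenvectors and those of `A - λ₁` are `λ₂`-eigenvectors.
Since `(a - λ₂) + (d - λ₂) = λ₁ - λ₂` is a unit in `ℤ_ℓ`, one of `a - λ₂`, `d - λ₂` is a unit,
and accordingly one of two choices of such columns forms a basis of `ℤ_ℓ²`.
-/

open Matrix Polynomial IsLocalRing

universe u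

instance IsAdicComplete.henselianLocalRing (R : Type*) [CommRing R] [IsLocalRing R]
    [IsAdicComplete (maximalIdeal R) R] : HenselianLocalRing R where
  is_henselian f hf a₀ h₁ h₂ := HenselianRing.is_henselian f hf a₀ h₁ (h₂.map _)

theorem add_eq_of_quadratic_roots_of_ne {K : Type*} [CommRing K] [IsDomain K] {s d r₁ r₂ : K}
    (hne : r₁ ≠ r₂) (h₁ : r₁ ^ 2 - s * r₁ + d = 0) (h₂ : r₂ ^ 2 - s * r₂ + d = 0) :
    r₁ + r₂ = s := by
  have h : (r₁ - r₂) * (r₁ + r₂ - s) = 0 := by linear_combination h₁ - h₂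
  exact sub_eq_zero.mp ((mul_eq_zero.mp h).resolve_left (sub_ne_zero.mpr hne))

theorem IsLocalRing.isUnit_of_map_ne_zero {R K : Type*} [CommRing R] [IsLocalRing R] [Field K]
    {φ : R →+* K} (hφ : Function.Surjective φ) {x : R} (hx : φ x ≠ 0) : IsUnit x := by
  rwa [← notMem_maximalIdeal, ← ker_eq_maximalIdeal φ hφ, RingHom.mem_ker]

theorem HenselianLocalRing.exists_roots_of_residue_roots {R K : Type u} [CommRing R]
    [HenselianLocalRing R] [Field K] {φ : R →+* K} (hφ : Function.Surjective φ) {t D : R}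
    {r₁ r₂ : K} (hne : r₁ ≠ r₂) (h₁ : r₁ ^ 2 - φ t * r₁ + φ D = 0)
    (h₂ : r₂ ^ 2 - φ t * r₂ + φ D = 0) :
    ∃ l₁ l₂ : R, l₁ + l₂ = t ∧ l₁ * l₂ = D ∧ IsUnit (l₁ - l₂) := by
  have hsum : r₁ + r₂ = φ t := add_eq_of_quadratic_roots_of_ne hne h₁ h₂
  have hsimple : 2 * r₁ - φ t ≠ 0 := by
    rw [← hsum]
    exact fun h ↦ hne (by linear_combination h)
  have lift := ((HenselianLocalRing.TFAE R).out 0 2).mp ‹_›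
  obtain ⟨l, hl, hφl⟩ := lift φ hφ (X ^ 2 - C t * X + C D) (by monicity!) r₁
    (by simpa using h₁) (by simpa [one_add_one_eq_two, map_ofNat φ 2] using hsimple)
  replace hl : l ^ 2 - t * l + D = 0 := by simpa using hl
  refine ⟨l, t - l, by ring, by linear_combination -hl, isUnit_of_map_ne_zero hφ ?_⟩
  rw [map_sub, map_sub, hφl]
  exact fun h ↦ hsimple (by linear_combination h)

namespace Matrix

section FinTwo

variable {R : Type*} [CommRing R] {a b c d l₁ l₂ : R}

theorem mul_eigenvectors_left (htr : a + d = l₁ + l₂) (hdet : a * d - b * c = l₁ * l₂) :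
    !![a, b; c, d] * !![a - l₂, b; c, d - l₁] =
      !![a - l₂, b; c, d - l₁] * diagonal ![l₁, l₂] := by
  rw [diagonal_fin_two, mul_fin_two, mul_fin_two]
  ext i j; fin_cases i <;> fin_cases j <;> simp
  · linear_combination a * htr - hdet
  · linear_combination b * htr
  · linear_combination c * htr
  · linear_combination d * htr - hdet

theorem mul_eigenvectors_right (htr : a + d = l₁ + l₂) (hdet : a * d - b * c = l₁ * l₂) :
    !![a, b; c, d] * !![b, a - l₁; d - l₂, c] =
      !![b, a - l₁; d - l₂, c] * diagonal ![l₁, l₂] := by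
  rw [diagonal_fin_two, mul_fin_two, mul_fin_two]
  ext i j; fin_cases i <;> fin_cases j <;> simp
  · linear_combination b * htr
  · linear_combination a * htr - hdet
  · linear_combination d * htr - hdet
  · linear_combination c * htr

end FinTwo

theorem exists_conj_eq_diagonal_of_trace_det {R : Type*} [CommRing R] [IsLocalRing R]
    (A : Matrix (Fin 2) (Fin 2) R) {l₁ l₂ : R} (htr : A.trace = l₁ + l₂)
    (hdet : A.det = l₁ * l₂) (hu : IsUnit (l₁ - l₂)) :
    ∃ P : GL (Fin 2) R,
      (P : Matrix (Fin 2) (Fin 2) R) * A * ((P⁻¹ : GL (Fin 2) R) : Matrix (Fin 2) (Fin 2) R) =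
        diagonal ![l₁, l₂] := by
  suffices ∃ M : GL (Fin 2) R, A * M = M * diagonal ![l₁, l₂] by
    obtain ⟨M, hAM⟩ := this
    exact ⟨M⁻¹, by rw [inv_inv, mul_assoc, hAM, ← mul_assoc, Units.inv_mul, one_mul]⟩
  obtain ⟨a, b, c, d, rfl⟩ : ∃ a b c d, A = !![a, b; c, d] := ⟨_, _, _, _, A.eta_fin_two⟩
  rw [trace_fin_two_of] at htr
  rw [det_fin_two_of] at hdet
  have hsum : (a - l₂) + (d - l₂) = l₁ - l₂ := by linear_combination htr
  rcases isUnit_or_isUnit_of_isUnit_add (hsum ▸ hu) with ha | hd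
  · refine ⟨GeneralLinearGroup.mk'' _ ?_, mul_eigenvectors_left htr hdet⟩
    convert (hu.mul ha).neg using 1
    rw [det_fin_two_of]
    linear_combination hdet - l₂ * htr
  · refine ⟨GeneralLinearGroup.mk'' _ ?_, mul_eigenvectors_right htr hdet⟩
    convert hu.mul hd using 1
    rw [det_fin_two_of]
    linear_combination l₂ * htr - hdet

theorem exists_conj_eq_diagonal_of_residue_roots {R K : Type u} [CommRing R]
    [HenselianLocalRing R] [Field K] {φ : R →+* K} (hφ : Function.Surjective φ)
    (A : Matrix (Fin 2) (Fin 2) R) {r₁ r₂ : K} (hne : r₁ ≠ r₂)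
    (h₁ : r₁ ^ 2 - φ A.trace * r₁ + φ A.det = 0) (h₂ : r₂ ^ 2 - φ A.trace * r₂ + φ A.det = 0) :
    ∃ (P : GL (Fin 2) R) (l₁ l₂ : R),
      (P : Matrix (Fin 2) (Fin 2) R) * A * ((P⁻¹ : GL (Fin 2) R) : Matrix (Fin 2) (Fin 2) R) =
        diagonal ![l₁, l₂] := by
  obtain ⟨l₁, l₂, htr, hdet, hu⟩ :=
    HenselianLocalRing.exists_roots_of_residue_roots hφ hne h₁ h₂
  obtain ⟨P, hP⟩ := A.exists_conj_eq_diagonal_of_trace_det htr.symm hdet.symm hu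
  exact ⟨P, l₁, l₂, hP⟩

end Matrix

/-- A 2×2 matrix over `ℤ_ℓ` whose characteristic polynomial has two distinct roots
mod `ℓ` is diagonalizable over `ℤ_ℓ`. -/
theorem stmt13 (p : ℕ) [Fact p.Prime] (A : Matrix (Fin 2) (Fin 2) ℤ_[p])
    (hroots : ∃ r₁ r₂ : ZMod p, r₁ ≠ r₂ ∧
      r₁ ^ 2 - PadicInt.toZMod (Matrix.trace A) * r₁ + PadicInt.toZMod A.det = 0 ∧
      r₂ ^ 2 - PadicInt.toZMod (Matrix.trace A) * r₂ + PadicInt.toZMod A.det = 0) :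
    ∃ (P : GL (Fin 2) ℤ_[p]) (lam₁ lam₂ : ℤ_[p]),
      (P : Matrix (Fin 2) (Fin 2) ℤ_[p]) * A * ((P⁻¹ : GL (Fin 2) ℤ_[p]) :
        Matrix (Fin 2) (Fin 2) ℤ_[p]) = Matrix.diagonal ![lam₁, lam₂] := by
  obtain ⟨r₁, r₂, hne, h₁, h₂⟩ := hroots
  exact A.exists_conj_eq_diagonal_of_residue_roots (ZMod.ringHom_surjective _) hne h₁ h₂
end

section
/- Let R = ℤ[α] = ℤ[X]/(X³ + X + 1), where α denotes the image of X (a root of x³ + x + 1). Let b, c be integers such that 1 + b + c is not divisible by 3. Then the elements A = α² + bα + c and B = 16·(1 + α + α²) are coprime in R; that is, there exist u, v ∈ R with u·A + v·B = 1. -/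
/-!
Treat the factors `16` and `β = 1 + α + α²` separately. The norm of `α² + bα + c` is a multiple
of it in `ℤ[α]` and is always odd, so it is coprime to `16`. Since
`β (α² - α + 1) = α⁴ + α² + 1 = 1 - α` and `β (α² - 2α + 2) = 3`, reducing modulo `β` sends `α`
to `1`, so `α² + bα + c ≡ 1 + b + c`, which is coprime to `3`, a multiple of `β`.
-/

open Polynomial

/-- The norm of `α² + bα + c` from `ℚ(α)` to `ℚ`, where `α³ + α + 1 = 0`. -/
def cubicNorm (b c : ℤ) : ℤ :=
  -b ^ 3 + b ^ 2 * c + 3 * b * c - b + c ^ 3 - 2 * c ^ 2 + c + 1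

lemma odd_cubicNorm (b c : ℤ) : Odd (cubicNorm b c) := by
  rw [← Int.not_even_iff_odd]
  by_cases hb : Even b <;> by_cases hc : Even c <;>
    simp [cubicNorm, parity_simps, hb, hc, show Odd (3 : ℤ) by decide]

section CubicRoot

variable {R : Type*} [CommRing R] {r : R}

lemma dvd_cubicNorm (hr : r ^ 3 + r + 1 = 0) (b c : ℤ) :
    r ^ 2 + b * r + c ∣ (cubicNorm b c : R) :=
  ⟨(c ^ 2 - 2 * c + 1 + b ^ 2 + b) + (-(b * c) - 1) * r + (b ^ 2 - c + 1) * r ^ 2, by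
    push_cast [cubicNorm]
    linear_combination (-(b ^ 3 - 2 * b * c + b - 1 : R) - (b ^ 2 - c + 1) * r) * hr⟩

lemma one_add_add_sq_dvd_three (hr : r ^ 3 + r + 1 = 0) : 1 + r + r ^ 2 ∣ (3 : R) :=
  ⟨r ^ 2 - 2 * r + 2, by linear_combination (1 - r) * hr⟩

lemma one_add_add_sq_dvd_sub_one (hr : r ^ 3 + r + 1 = 0) : 1 + r + r ^ 2 ∣ r - 1 :=
  ⟨-(r ^ 2 - r + 1), by linear_combination r * hr⟩

lemma isCoprime_sq_add_mul_add_sixteen (hr : r ^ 3 + r + 1 = 0) (b c : ℤ) :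
    IsCoprime (r ^ 2 + b * r + c) (16 : R) := by
  have h2 : IsCoprime (cubicNorm b c) 2 := Int.isCoprime_two_right.mpr (odd_cubicNorm b c)
  have h16 : IsCoprime (cubicNorm b c) 16 := by simpa using h2.pow_right (n := 4)
  simpa using h16.intCast.of_isCoprime_of_dvd_left (dvd_cubicNorm hr b c)

lemma isCoprime_sq_add_mul_add_one_add_add_sq (hr : r ^ 3 + r + 1 = 0) {b c : ℤ}
    (h : ¬ 3 ∣ 1 + b + c) :
    IsCoprime (r ^ 2 + b * r + c) (1 + r + r ^ 2) := by
  have h3 : IsCoprime (1 + b + c) 3 := (Int.prime_three.coprime_iff_not_dvd.mpr h).symm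
  have hβ : IsCoprime (1 + b + c : R) (1 + r + r ^ 2) := by
    simpa using h3.intCast.of_isCoprime_of_dvd_right (R := R)
      (by exact_mod_cast one_add_add_sq_dvd_three hr)
  obtain ⟨k, hk⟩ := one_add_add_sq_dvd_sub_one hr
  have hA : r ^ 2 + b * r + c = (1 + b + c) + (1 + r + r ^ 2) * (k * (r + 1 + b)) := by
    linear_combination (r + 1 + b) * hk
  rw [hA]
  exact hβ.add_mul_left_left _

theorem isCoprime_sq_add_mul_add_sixteen_mul (hr : r ^ 3 + r + 1 = 0) {b c : ℤ}
    (h : ¬ 3 ∣ 1 + b + c) :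
    IsCoprime (r ^ 2 + b * r + c) (16 * (1 + r + r ^ 2)) :=
  (isCoprime_sq_add_mul_add_sixteen hr b c).mul_right
    (isCoprime_sq_add_mul_add_one_add_add_sq hr h)

end CubicRoot

/-- In `R = ℤ[α] = ℤ[X]/(X³ + X + 1)`, if `3 ∤ 1 + b + c` then
`α² + bα + c` and `16(1 + α + α²)` are coprime. -/
theorem stmt15 (b c : ℤ) (h : ¬ (3 ∣ 1 + b + c)) :
    IsCoprime
      ((AdjoinRoot.root (X ^ 3 + X + 1 : ℤ[X])) ^ 2 +
        (b : AdjoinRoot (X ^ 3 + X + 1 : ℤ[X])) * AdjoinRoot.root (X ^ 3 + X + 1 : ℤ[X]) +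
        (c : AdjoinRoot (X ^ 3 + X + 1 : ℤ[X])))
      (16 * (1 + AdjoinRoot.root (X ^ 3 + X + 1 : ℤ[X]) +
        (AdjoinRoot.root (X ^ 3 + X + 1 : ℤ[X])) ^ 2)) := by
  refine isCoprime_sq_add_mul_add_sixteen_mul ?_ h
  have := AdjoinRoot.mk_self (f := (X ^ 3 + X + 1 : ℤ[X]))
  rwa [map_add, map_add, map_pow, AdjoinRoot.mk_X, map_one] at this
end

section
/- Let ℓ ≥ 5 be a prime and let H be a subgroup of GL₂(𝔽_ℓ) whose order is divisible by ℓ (equivalently, H contains an element of order ℓ). Then either H contains SL₂(𝔽_ℓ), or H is contained in a Borel subgroup of GL₂(𝔽_ℓ), i.e., there exists P ∈ GL₂(𝔽_ℓ) such that every element of P·H·P⁻¹ is upper triangular. -/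
/-!
An element of order `p` of `GL₂(𝔽_p)` is unipotent (`(g - 1)^p = g^p - 1 = 0`), hence conjugate
to `!![1, 1; 0, 1]`, whose powers are all upper transvections. So after conjugation `H` contains
every upper transvection. If moreover some `k ∈ H` is not upper triangular, an upper transvection
times `k` has a zero `(0, 0)` entry, and conjugating the upper transvections by such a matrix gives
every lower transvection; upper and lower transvections generate `SL₂`.
-/

open Matrix

theorem Matrix.pow_card_eq_zero_of_isNilpotent {n R : Type*} [Fintype n] [DecidableEq n]
    [CommRing R] [IsDomain R] {M : Matrix n n R} (hM : IsNilpotent M) :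
    M ^ Fintype.card n = 0 := by
  have h := (isNilpotent_charpoly_sub_pow_of_isNilpotent hM).eq_zero
  rw [sub_eq_zero] at h
  simpa [h] using aeval_self_charpoly M

section CommRing

variable {R : Type*} [CommRing R]

def upperTransvection (c : R) : GL (Fin 2) R :=
  SpecialLinearGroup.toGL (SpecialLinearGroup.transvection zero_ne_one c)

def lowerTransvection (c : R) : GL (Fin 2) R :=
  SpecialLinearGroup.toGL (SpecialLinearGroup.transvection one_ne_zero c)

theorem coe_upperTransvection (c : R) :
    (upperTransvection c : Matrix (Fin 2) (Fin 2) R) = !![1, c; 0, 1] := by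
  ext i j
  fin_cases i <;> fin_cases j <;> simp [upperTransvection, SpecialLinearGroup.transvection_coe]

theorem coe_lowerTransvection (c : R) :
    (lowerTransvection c : Matrix (Fin 2) (Fin 2) R) = !![1, 0; c, 1] := by
  ext i j
  fin_cases i <;> fin_cases j <;> simp [lowerTransvection, SpecialLinearGroup.transvection_coe]

theorem upperTransvection_pow (c : R) (n : ℕ) :
    upperTransvection c ^ n = upperTransvection (n * c) := by
  induction n with
  | zero => simp [upperTransvection]
  | succ n ih =>
    rw [pow_succ, ih, upperTransvection, upperTransvection, upperTransvection, ← map_mul,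
      ← SpecialLinearGroup.transvection_add]
    push_cast
    ring_nf

theorem mul_upperTransvection_of_apply_zero_zero {g : GL (Fin 2) R}
    (hg : (g : Matrix (Fin 2) (Fin 2) R) 0 0 = 0) (c : R) :
    g * upperTransvection (c * (g : Matrix (Fin 2) (Fin 2) R) 0 1) =
      lowerTransvection (c * (g : Matrix (Fin 2) (Fin 2) R) 1 0) * g := by
  ext i j
  fin_cases i <;> fin_cases j <;>
    simp [coe_upperTransvection, coe_lowerTransvection, mul_apply, Fin.sum_univ_two, hg]
  ring

end CommRing

section Field

variable {F : Type*} [Field F]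

theorem mem_of_det_eq_one_of_transvection_mem {K : Subgroup (GL (Fin 2) F)}
    (hU : ∀ c, upperTransvection c ∈ K) (hL : ∀ c, lowerTransvection c ∈ K) {A : GL (Fin 2) F}
    (hA : (A : Matrix (Fin 2) (Fin 2) F).det = 1) : A ∈ K := by
  rw [show A = SpecialLinearGroup.toGL ⟨A, hA⟩ from Units.ext rfl]
  refine SL2.transvection_induction (fun S ↦ SpecialLinearGroup.toGL S ∈ K) (fun i j hij c ↦ ?_)
    (fun S T hS hT ↦ by simpa only [map_mul] using mul_mem hS hT) _
  fin_cases i <;> fin_cases j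
  exacts [absurd rfl hij, hU c, hL c, absurd rfl hij]

theorem lowerTransvection_mem_of_apply_one_zero_ne_zero {K : Subgroup (GL (Fin 2) F)}
    (hU : ∀ c, upperTransvection c ∈ K) {k : GL (Fin 2) F} (hk : k ∈ K)
    (hk10 : (k : Matrix (Fin 2) (Fin 2) F) 1 0 ≠ 0) (c : F) : lowerTransvection c ∈ K := by
  set g := upperTransvection (-((k : Matrix (Fin 2) (Fin 2) F) 0 0 / k 1 0)) * k
  have hg : g ∈ K := mul_mem (hU _) hk
  have hg00 : (g : Matrix (Fin 2) (Fin 2) F) 0 0 = 0 := by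
    simp [g, coe_upperTransvection, mul_apply, Fin.sum_univ_two, hk10]
  have hg10 : (g : Matrix (Fin 2) (Fin 2) F) 1 0 = k 1 0 := by
    simp [g, coe_upperTransvection, mul_apply, Fin.sum_univ_two]
  have hconj := mul_upperTransvection_of_apply_zero_zero hg00 (c / k 1 0)
  rw [hg10, div_mul_cancel₀ c hk10, ← mul_inv_eq_iff_eq_mul] at hconj
  rw [← hconj]
  exact mul_mem (mul_mem hg (hU _)) (inv_mem hg)

theorem forall_det_eq_one_mem_or_forall_apply_one_zero_eq_zero {K : Subgroup (GL (Fin 2) F)}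
    (hU : ∀ c, upperTransvection c ∈ K) :
    (∀ A : GL (Fin 2) F, (A : Matrix (Fin 2) (Fin 2) F).det = 1 → A ∈ K) ∨
      ∀ k ∈ K, (k : Matrix (Fin 2) (Fin 2) F) 1 0 = 0 := by
  refine or_iff_not_imp_right.mpr fun hB _ hA ↦ ?_
  obtain ⟨k, hk, hk10⟩ := not_forall₂.mp hB
  exact mem_of_det_eq_one_of_transvection_mem hU
    (lowerTransvection_mem_of_apply_one_zero_ne_zero hU hk hk10) hA

/-- The columns `N v, v`, for any `v` with `N v ≠ 0`, form a Jordan basis of `N`. -/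
theorem exists_mul_eq_mul_single_of_mul_self_eq_zero {N : Matrix (Fin 2) (Fin 2) F}
    (hN2 : N * N = 0) (hN : N ≠ 0) :
    ∃ Q : GL (Fin 2) F,
      N * (Q : Matrix (Fin 2) (Fin 2) F) = (Q : Matrix (Fin 2) (Fin 2) F) * single 0 1 1 := by
  obtain ⟨v, hv⟩ : ∃ v, N *ᵥ v ≠ 0 := by
    by_contra! h
    exact hN (ext fun i j ↦ by simpa using congrFun (h (Pi.single j 1)) i)
  set w := N *ᵥ v
  have hw : N *ᵥ w = 0 := by rw [mulVec_mulVec, hN2, zero_mulVec]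
  set P : Matrix (Fin 2) (Fin 2) F := (of ![w, v])ᵀ
  have hP : IsUnit P := by
    rw [← linearIndependent_cols_iff_isUnit]
    refine LinearIndependent.pair_iff.mpr fun s t hst ↦ ?_
    have ht : t • w = 0 := by
      simpa only [mulVec_add, mulVec_smul, hw, smul_zero, zero_add, mulVec_zero] using
        congrArg (N *ᵥ ·) hst
    obtain rfl : t = 0 := (smul_eq_zero.mp ht).resolve_right hv
    exact ⟨(smul_eq_zero.mp (by simpa using hst)).resolve_right hv, rfl⟩
  obtain ⟨Q, hQ⟩ := hP
  refine ⟨Q, ?_⟩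
  rw [hQ]
  ext i j
  fin_cases j
  · simpa [P, mul_apply, mulVec, dotProduct] using congrFun hw i
  · simpa [P, mul_apply, mulVec, dotProduct] using congrFun (show N *ᵥ v = w from rfl) i

theorem isConj_upperTransvection_one_of_pow_char_eq_one {p : ℕ} [Fact p.Prime] [CharP F p]
    {g : GL (Fin 2) F} (hgp : g ^ p = 1) (hg : g ≠ 1) : IsConj (upperTransvection 1) g := by
  set N := (g : Matrix (Fin 2) (Fin 2) F) - 1
  have hNp : N ^ p = 0 := by
    rw [sub_pow_char_of_commute p (Commute.one_right _), one_pow, ← Units.val_pow_eq_pow_val,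
      hgp, Units.val_one, sub_self]
  have hN2 : N * N = 0 := by
    simpa [sq] using pow_card_eq_zero_of_isNilpotent ⟨p, hNp⟩
  have hN : N ≠ 0 := fun h ↦ hg (Units.ext (sub_eq_zero.mp h))
  obtain ⟨Q, hQ⟩ := exists_mul_eq_mul_single_of_mul_self_eq_zero hN2 hN
  refine isConj_iff.mpr ⟨Q, mul_inv_eq_iff_eq_mul.mpr (Units.ext ?_)⟩
  have hg' : (g : Matrix (Fin 2) (Fin 2) F) = 1 + N := by simp [N]
  simp [upperTransvection, SpecialLinearGroup.transvection_coe, hg', mul_add, add_mul, ← hQ]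

end Field

theorem stmt17_general (p : ℕ) [Fact p.Prime]
    (H : Subgroup (GL (Fin 2) (ZMod p))) (hcard : p ∣ Nat.card H) :
    (∀ A : GL (Fin 2) (ZMod p),
        Matrix.det (A : Matrix (Fin 2) (Fin 2) (ZMod p)) = 1 → A ∈ H) ∨
    (∃ P : GL (Fin 2) (ZMod p), ∀ g ∈ H,
        ((P * g * P⁻¹ : GL (Fin 2) (ZMod p)) : Matrix (Fin 2) (Fin 2) (ZMod p)) 1 0 = 0) := by
  obtain ⟨g, hg⟩ := exists_prime_orderOf_dvd_card' p hcard
  obtain ⟨hgp, hg1⟩ := orderOf_eq_prime_iff.mp ((Subgroup.orderOf_coe g).trans hg)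
  obtain ⟨Q, hQ⟩ := isConj_iff.mp (isConj_upperTransvection_one_of_pow_char_eq_one hgp hg1)
  set K := H.comap (MulAut.conj Q).toMonoidHom
  have hK (x) : x ∈ K ↔ Q * x * Q⁻¹ ∈ H := Iff.rfl
  have hU (c : ZMod p) : upperTransvection c ∈ K := by
    have h1 : upperTransvection 1 ∈ K := by rw [hK, hQ]; exact g.2
    simpa [upperTransvection_pow] using pow_mem h1 c.val
  rcases forall_det_eq_one_mem_or_forall_apply_one_zero_eq_zero hU with hSL | hB
  · refine Or.inl fun A hA ↦ ?_
    simpa [hK, mul_assoc] using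
      hSL (Q⁻¹ * A * Q) (by simp [hA, GeneralLinearGroup.det_ne_zero])
  · exact Or.inr ⟨Q⁻¹, fun x hx ↦ hB _ (by simpa [hK, mul_assoc] using hx)⟩

/-- For `ℓ ≥ 5`, a subgroup of `GL₂(𝔽_ℓ)` of order divisible by `ℓ` either contains
`SL₂(𝔽_ℓ)` or is contained in a Borel subgroup (is simultaneously upper-triangularizable). -/
theorem stmt17 (p : ℕ) [Fact p.Prime] (hp : 5 ≤ p)
    (H : Subgroup (GL (Fin 2) (ZMod p))) (hcard : p ∣ Nat.card H) :
    (∀ A : GL (Fin 2) (ZMod p),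
        Matrix.det (A : Matrix (Fin 2) (Fin 2) (ZMod p)) = 1 → A ∈ H) ∨
    (∃ P : GL (Fin 2) (ZMod p), ∀ g ∈ H,
        ((P * g * P⁻¹ : GL (Fin 2) (ZMod p)) : Matrix (Fin 2) (Fin 2) (ZMod p)) 1 0 = 0) :=
  stmt17_general p H hcard
end
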